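/- arXiv:1805.04648 — 6 statements merged into one kernel-verified Lean document; each statement's English description precedes it below -/
import Mathlib

section
/- For every real-valued function φ defined on the p×p real positive semidefinite matrices that is (i) concave, i.e. φ(λM + (1−λ)M′) ≥ λφ(M) + (1−λ)φ(M′) for all positive semidefinite M, M′ and all λ ∈ [0,1], and (ii) signed permutation invariant, i.e. φ(RᵀMR) = φ(M) for every p×p signed permutation matrix R and every positive semidefinite M, and for every design measure w, one has φ(M(w)) ≤ φ(M₀). (Theorem 1: the uniform design measure is φ-optimal.) -/
open Matrix Finset

namespace OofA

/-- The index set `S` of pairs `(i,j)` with `i < j`. -/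
abbrev Pairs (m : ℕ) := {ij : Fin m × Fin m // ij.1 < ij.2}

/-- `z_{ij}(a)`: for a treatment `a` (a permutation, `a k` being the component placed at
position `k`), this equals `c h` where `h` is the distance between the positions of the
components `i` and `j` in `a`, with sign `+` if `i` precedes `j` and `-` otherwise. -/
noncomputable def z {m : ℕ} (c : ℕ → ℝ) (a : Equiv.Perm (Fin m)) (ij : Pairs m) : ℝ :=
  if (a.symm ij.1.1 : ℕ) < (a.symm ij.1.2 : ℕ) then
    c (Nat.dist (a.symm ij.1.1 : ℕ) (a.symm ij.1.2 : ℕ))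
  else
    -c (Nat.dist (a.symm ij.1.1 : ℕ) (a.symm ij.1.2 : ℕ))

/-- The vector `x(a) = (1, z(a)ᵀ)ᵀ ∈ ℝ^p`, indexed by `Unit ⊕ Pairs m`. -/
noncomputable def x {m : ℕ} (c : ℕ → ℝ) (a : Equiv.Perm (Fin m)) : (Unit ⊕ Pairs m) → ℝ :=
  Sum.elim (fun _ => (1 : ℝ)) (z c a)

/-- The moment matrix `M(w) = Σ_a w(a) x(a) x(a)ᵀ` of a design measure `w`. -/
noncomputable def momentMatrix {m : ℕ} (c : ℕ → ℝ) (w : Equiv.Perm (Fin m) → ℝ) :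
    Matrix (Unit ⊕ Pairs m) (Unit ⊕ Pairs m) ℝ :=
  ∑ a : Equiv.Perm (Fin m), w a • Matrix.vecMulVec (x c a) (x c a)

/-- The moment matrix `M₀` of the uniform design measure `w₀(a) = 1/m!`. -/
noncomputable def M0 (m : ℕ) (c : ℕ → ℝ) : Matrix (Unit ⊕ Pairs m) (Unit ⊕ Pairs m) ℝ :=
  momentMatrix c (fun _ => 1 / (Nat.factorial m : ℝ))

/-- A signed permutation matrix: exactly one nonzero entry in each row and in each column,
each nonzero entry being `1` or `-1`. -/
def IsSignedPerm {n : Type*} [Fintype n] (R : Matrix n n ℝ) : Prop :=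
  (∀ i, ∃! j, R i j ≠ 0) ∧ (∀ j, ∃! i, R i j ≠ 0) ∧
    (∀ i j, R i j ≠ 0 → R i j = 1 ∨ R i j = -1)

/-- `b₀ = (2/(m(m−1))) Σ_{h=1}^{m−1} (m−h) c_h²`. -/
noncomputable def b0 (m : ℕ) (c : ℕ → ℝ) : ℝ :=
  (2 / ((m : ℝ) * ((m : ℝ) - 1))) *
    ∑ h ∈ Finset.Icc 1 (m - 1), ((m : ℝ) - (h : ℝ)) * (c h) ^ 2

/-- `b₁ = (2/(m(m−1)(m−2))) Σ (m−h₁−h₂) c_{h₁} (2c_{h₁+h₂} − c_{h₂})`,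
summed over `h₁, h₂ ≥ 1` with `h₁ + h₂ ≤ m − 1`. -/
noncomputable def b1 (m : ℕ) (c : ℕ → ℝ) : ℝ :=
  (2 / ((m : ℝ) * ((m : ℝ) - 1) * ((m : ℝ) - 2))) *
    ∑ h1 ∈ Finset.Icc 1 (m - 1), ∑ h2 ∈ Finset.Icc 1 (m - 1 - h1),
      ((m : ℝ) - (h1 : ℝ) - (h2 : ℝ)) * c h1 * (2 * c (h1 + h2) - c h2)

/-- The `q × q` matrix `V` of (7). -/
noncomputable def V (m : ℕ) : Matrix (Pairs m) (Pairs m) ℝ := fun ij kl =>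
  if (ij.1.1 = kl.1.1 ∧ ij.1.2 ≠ kl.1.2) ∨ (ij.1.1 ≠ kl.1.1 ∧ ij.1.2 = kl.1.2) then 1
  else if ij.1.1 = kl.1.2 ∨ ij.1.2 = kl.1.1 then -1
  else 0

-- === auxiliary development ===
def pmap {m : ℕ} (τ : Equiv.Perm (Fin m)) (ij : Pairs m) : Pairs m :=
  ⟨(min (τ ij.1.1) (τ ij.1.2), max (τ ij.1.1) (τ ij.1.2)),
    min_lt_max.mpr (fun h => (ne_of_lt ij.2) (τ.injective h))⟩

lemma pmap_pmap {m : ℕ} (τ : Equiv.Perm (Fin m)) (ij : Pairs m) :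
    pmap τ.symm (pmap τ ij) = ij := by
  obtain ⟨⟨i, j⟩, hij⟩ := ij
  have hne : τ i ≠ τ j := fun h => (ne_of_lt hij) (τ.injective h)
  rcases hne.lt_or_gt with h | h
  · simp [pmap, min_eq_left h.le, max_eq_right h.le, min_eq_left hij.le, max_eq_right hij.le]
  · simp [pmap, min_eq_right h.le, max_eq_left h.le, min_eq_right hij.le, max_eq_left hij.le]

def pEquiv {m : ℕ} (τ : Equiv.Perm (Fin m)) : Pairs m ≃ Pairs m :=
  ⟨pmap τ, pmap τ.symm, pmap_pmap τ, fun ij => by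
    have := pmap_pmap τ.symm ij; simpa using this⟩

noncomputable def sgn {m : ℕ} (τ : Equiv.Perm (Fin m)) (ij : Pairs m) : ℝ :=
  if τ ij.1.1 < τ ij.1.2 then 1 else -1

lemma z_mul {m : ℕ} (c : ℕ → ℝ) (σ a : Equiv.Perm (Fin m)) (ij : Pairs m) :
    z c (σ * a) ij = sgn σ.symm ij * z c a (pmap σ.symm ij) := by
  obtain ⟨⟨i, j⟩, hij⟩ := ij
  have hsymm : ∀ y : Fin m, (σ * a).symm y = a.symm (σ.symm y) := fun y => by
    simp [Equiv.Perm.mul_def]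
  have hne : σ.symm i ≠ σ.symm j := fun h => (ne_of_lt hij) (σ.symm.injective h)
  have hp : (a.symm (σ.symm i) : ℕ) ≠ (a.symm (σ.symm j) : ℕ) := by
    intro h; exact hne (a.symm.injective (Fin.val_injective h))
  rcases hne.lt_or_gt with h | h
  · simp only [z, sgn, pmap, hsymm, min_eq_left h.le, max_eq_right h.le, if_pos h, one_mul]
  · have hs : ¬ σ.symm i < σ.symm j := not_lt_of_gt h
    simp only [z, sgn, pmap, hsymm, min_eq_right h.le, max_eq_left h.le, if_neg hs]
    rcases hp.lt_or_gt with hp1 | hp1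
    · rw [if_pos hp1, if_neg (not_lt_of_gt hp1), Nat.dist_comm]; ring
    · rw [if_neg (not_lt_of_gt hp1), if_pos hp1, Nat.dist_comm]; ring

def Fp {m : ℕ} (σ : Equiv.Perm (Fin m)) : (Unit ⊕ Pairs m) ≃ (Unit ⊕ Pairs m) :=
  Equiv.sumCongr (Equiv.refl Unit) (pEquiv σ.symm)

noncomputable def eps {m : ℕ} (σ : Equiv.Perm (Fin m)) : Unit ⊕ Pairs m → ℝ :=
  Sum.elim (fun _ => 1) (sgn σ.symm)

lemma eps_pm {m : ℕ} (σ : Equiv.Perm (Fin m)) (u : Unit ⊕ Pairs m) :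
    eps σ u = 1 ∨ eps σ u = -1 := by
  cases u with
  | inl _ => left; rfl
  | inr ij =>
    simp only [eps, Sum.elim_inr, sgn]
    split
    · left; rfl
    · right; rfl

lemma x_mul {m : ℕ} (c : ℕ → ℝ) (σ a : Equiv.Perm (Fin m)) (u : Unit ⊕ Pairs m) :
    x c (σ * a) u = eps σ u * x c a (Fp σ u) := by
  cases u with
  | inl _ => simp [x, Fp, eps]
  | inr ij => simpa [x, Fp, eps, pEquiv] using z_mul c σ a ij

def mkR {p : Type*} [Fintype p] [DecidableEq p] (F : p ≃ p) (ε : p → ℝ) : Matrix p p ℝ :=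
  Matrix.of fun u v => if v = F u then ε u else 0

lemma mkR_mulVec {p : Type*} [Fintype p] [DecidableEq p] (F : p ≃ p) (ε : p → ℝ)
    (u : p → ℝ) : mkR F ε *ᵥ u = fun i => ε i * u (F i) := by
  ext i
  simp [mkR, mulVec, dotProduct, ite_mul]

lemma mkR_transpose {p : Type*} [Fintype p] [DecidableEq p] (F : p ≃ p) (ε : p → ℝ) :
    (mkR F ε)ᵀ = mkR F.symm (fun u => ε (F.symm u)) := by
  ext u v
  simp only [transpose_apply, mkR, Matrix.of_apply]
  by_cases h : u = F v
  · subst h; simp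
  · have h' : v ≠ F.symm u := fun hv => h (by rw [hv, Equiv.apply_symm_apply])
    simp [h, h']

lemma mkR_isSignedPerm {p : Type*} [Fintype p] [DecidableEq p] (F : p ≃ p) (ε : p → ℝ)
    (hε : ∀ u, ε u = 1 ∨ ε u = -1) : IsSignedPerm (mkR F ε) := by
  have hne : ∀ u, ε u ≠ 0 := fun u => by rcases hε u with h | h <;> simp [h]
  refine ⟨fun i => ⟨F i, by simp [mkR, hne i], ?_⟩,
    fun j => ⟨F.symm j, by simp [mkR, hne], ?_⟩, fun i j h => ?_⟩
  · intro y hy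
    by_contra hc
    exact hy (by simp [mkR, hc])
  · intro i hi
    by_contra hc
    have : j ≠ F i := fun hj => hc (by rw [hj, Equiv.symm_apply_apply])
    exact hi (by simp [mkR, this])
  · by_cases hj : j = F i
    · subst hj; simpa [mkR] using hε i
    · exfalso; apply h; simp [mkR, hj]

lemma vecMulVec_mulVec {p : Type*} [Fintype p] [DecidableEq p] (R : Matrix p p ℝ)
    (u v : p → ℝ) :
    Matrix.vecMulVec (R *ᵥ u) (R *ᵥ v) = R * Matrix.vecMulVec u v * Rᵀ := by
  rw [vecMulVec_eq Unit, vecMulVec_eq Unit, replicateCol_mulVec, ← vecMul_transpose, replicateRow_vecMul,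
    Matrix.mul_assoc, Matrix.mul_assoc, Matrix.mul_assoc]

lemma momentMatrix_shift {m : ℕ} (c : ℕ → ℝ) (w : Equiv.Perm (Fin m) → ℝ)
    (σ : Equiv.Perm (Fin m)) :
    momentMatrix c (fun a => w (σ⁻¹ * a)) =
      mkR (Fp σ) (eps σ) * momentMatrix c w * (mkR (Fp σ) (eps σ))ᵀ := by
  set R := mkR (Fp σ) (eps σ) with hR
  have hx : ∀ a, x c (σ * a) = R *ᵥ x c a := fun a => by
    rw [hR, mkR_mulVec]; ext u; exact x_mul c σ a u
  have h1 : momentMatrix c (fun a => w (σ⁻¹ * a)) =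
      ∑ a : Equiv.Perm (Fin m), w a • Matrix.vecMulVec (x c (σ * a)) (x c (σ * a)) := by
    rw [momentMatrix]
    exact (Fintype.sum_equiv (Equiv.mulLeft σ)
      (fun a => w a • Matrix.vecMulVec (x c (σ * a)) (x c (σ * a)))
      (fun b => w (σ⁻¹ * b) • Matrix.vecMulVec (x c b) (x c b))
      (fun a => by simp)).symm
  rw [h1]
  simp_rw [hx, vecMulVec_mulVec]
  rw [momentMatrix, Matrix.mul_sum, Matrix.sum_mul]
  congr 1
  ext a
  rw [Matrix.mul_smul, Matrix.smul_mul]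

lemma momentMatrix_posSemidef {m : ℕ} (c : ℕ → ℝ) (w : Equiv.Perm (Fin m) → ℝ)
    (hw0 : ∀ a, 0 ≤ w a) : (momentMatrix c w).PosSemidef := by
  have heq : momentMatrix c w =
      (Matrix.of fun (a : Equiv.Perm (Fin m)) i => Real.sqrt (w a) * x c a i)ᴴ *
      (Matrix.of fun (a : Equiv.Perm (Fin m)) i => Real.sqrt (w a) * x c a i) := by
    ext i j
    simp only [momentMatrix, Matrix.sum_apply, Matrix.smul_apply, vecMulVec_apply,
      Matrix.mul_apply, conjTranspose_apply, Matrix.of_apply, star_trivial, smul_eq_mul]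
    refine Finset.sum_congr rfl fun a _ => ?_
    rw [mul_mul_mul_comm, Real.mul_self_sqrt (hw0 a)]
  rw [heq]
  exact posSemidef_conjTranspose_mul_self _

lemma psd_smul {p : Type*} [Fintype p] {M : Matrix p p ℝ} (h : M.PosSemidef) {t : ℝ}
    (ht : 0 ≤ t) : (t • M).PosSemidef := by
  refine ⟨?_, fun v => ?_⟩
  · show (t • M)ᴴ = t • M
    rw [conjTranspose_smul, star_trivial, h.1]
  · exact (h.smul ht).2 v

lemma psd_add {p : Type*} [Fintype p] {M M' : Matrix p p ℝ} (h : M.PosSemidef)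
    (h' : M'.PosSemidef) : (M + M').PosSemidef := by
  refine ⟨h.1.add h'.1, fun v => ?_⟩
  exact (h.add h').2 v

/-- Theorem 1: the uniform design measure `w₀` is `φ`-optimal for every criterion `φ`
that is concave on positive semidefinite matrices and signed permutation invariant. -/
theorem statement0 {m : ℕ} (hm : 3 ≤ m) (c : ℕ → ℝ) (hc1 : c 1 = 1)
    (hmono : ∀ h : ℕ, 1 ≤ h → h + 1 ≤ m - 1 → c (h + 1) ≤ c h)
    (hlast : 0 ≤ c (m - 1))
    (φ : Matrix (Unit ⊕ Pairs m) (Unit ⊕ Pairs m) ℝ → ℝ)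
    (hconc : ∀ M M' : Matrix (Unit ⊕ Pairs m) (Unit ⊕ Pairs m) ℝ,
      M.PosSemidef → M'.PosSemidef → ∀ t : ℝ, 0 ≤ t → t ≤ 1 →
        t * φ M + (1 - t) * φ M' ≤ φ (t • M + (1 - t) • M'))
    (hinv : ∀ R M : Matrix (Unit ⊕ Pairs m) (Unit ⊕ Pairs m) ℝ,
      IsSignedPerm R → M.PosSemidef → φ (Rᵀ * M * R) = φ M)
    (w : Equiv.Perm (Fin m) → ℝ) (hw0 : ∀ a, 0 ≤ w a)
    (hw1 : ∑ a : Equiv.Perm (Fin m), w a = 1) :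
    φ (momentMatrix c w) ≤ φ (M0 m c) := by
  classical
  set q : ℝ := 1 / (Nat.factorial m : ℝ) with hq
  have hfac : (0 : ℝ) < (Nat.factorial m : ℝ) := by
    exact_mod_cast Nat.factorial_pos m
  have hq0 : 0 ≤ q := by positivity
  set P : Equiv.Perm (Fin m) → Matrix (Unit ⊕ Pairs m) (Unit ⊕ Pairs m) ℝ :=
    fun σ => momentMatrix c (fun a => w (σ⁻¹ * a)) with hP
  have hMw_psd : (momentMatrix c w).PosSemidef := momentMatrix_posSemidef c w hw0
  have hP_psd : ∀ σ, (P σ).PosSemidef := fun σ =>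
    momentMatrix_posSemidef c _ (fun a => hw0 _)
  -- invariance
  have hφP : ∀ σ, φ (P σ) = φ (momentMatrix c w) := by
    intro σ
    simp only [hP]
    rw [momentMatrix_shift c w σ]
    have hsp : IsSignedPerm (mkR (Fp σ) (eps σ))ᵀ := by
      rw [mkR_transpose]
      exact mkR_isSignedPerm _ _ (fun u => eps_pm σ _)
    have h1 := hinv (mkR (Fp σ) (eps σ))ᵀ (momentMatrix c w) hsp hMw_psd
    rwa [transpose_transpose] at h1
  -- sum weights
  have hcard : (Fintype.card (Equiv.Perm (Fin m)) : ℝ) = (Nat.factorial m : ℝ) := by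
    rw [Fintype.card_perm, Fintype.card_fin]
  have hsum1 : ∑ _σ : Equiv.Perm (Fin m), q = 1 := by
    rw [Finset.sum_const, nsmul_eq_mul, Finset.card_univ, hcard, hq]
    field_simp
  -- key identity
  have hkey : M0 m c = ∑ σ : Equiv.Perm (Fin m), q • P σ := by
    have hsum : ∀ b : Equiv.Perm (Fin m), ∑ σ : Equiv.Perm (Fin m), w (σ⁻¹ * b) = 1 := by
      intro b
      rw [← hw1]
      exact Fintype.sum_equiv ((Equiv.inv (Equiv.Perm (Fin m))).trans (Equiv.mulRight b))
        (fun σ => w (σ⁻¹ * b)) w (fun σ => rfl)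
    rw [M0, momentMatrix]
    simp_rw [hP, momentMatrix, Finset.smul_sum, smul_smul]
    rw [Finset.sum_comm]
    refine Finset.sum_congr rfl fun b _ => ?_
    rw [← Finset.sum_smul, ← Finset.mul_sum, hsum b, mul_one, hq]
  -- concavity
  have hconcOn : ConcaveOn ℝ {M : Matrix (Unit ⊕ Pairs m) (Unit ⊕ Pairs m) ℝ | M.PosSemidef}
      φ := by
    constructor
    · intro M hM M' hM' a b ha hb hab
      exact psd_add (psd_smul hM ha) (psd_smul hM' hb)
    · intro M hM M' hM' a b ha hb hab
      have hb' : b = 1 - a := by linarith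
      subst hb'
      have ha1 : a ≤ 1 := by linarith
      simpa [smul_eq_mul] using hconc M M' hM hM' a ha ha1
  have jensen := hconcOn.le_map_sum (t := Finset.univ) (w := fun _ => q) (p := P)
    (fun _ _ => hq0) hsum1 (fun σ _ => hP_psd σ)
  calc φ (momentMatrix c w) = ∑ σ : Equiv.Perm (Fin m), q • φ (P σ) := by
        simp_rw [hφP, smul_eq_mul, ← Finset.sum_mul, hsum1, one_mul]
    _ ≤ φ (∑ σ : Equiv.Perm (Fin m), q • P σ) := jensen
    _ = φ (M0 m c) := by rw [hkey]

end OofA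
end

section
/- The moment matrix of the uniform design measure is the block-diagonal matrix M₀ = diag(1, b₀I_q + b₁V); that is, indexing rows and columns of M₀ by {0} ∪ S, the (0,0) entry of M₀ equals 1, every entry of M₀ coupling the index 0 with an element of S equals 0, and the S×S block of M₀ equals b₀I_q + b₁V. (Theorem 2, first part.) -/
open Matrix Finset

namespace OofA

noncomputable def zf (c : ℕ → ℝ) (p q : ℕ) : ℝ :=
  if p < q then c (Nat.dist p q) else -c (Nat.dist p q)

lemma zf_sq (c : ℕ → ℝ) (p q : ℕ) : (zf c p q)^2 = (c (Nat.dist p q))^2 := by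
  unfold zf; split <;> ring

lemma zf_lt (c : ℕ → ℝ) {p q : ℕ} (h : p < q) : zf c p q = c (q - p) := by
  rw [zf, if_pos h, Nat.dist_eq_sub_of_le h.le]

lemma zf_gt (c : ℕ → ℝ) {p q : ℕ} (h : q < p) : zf c p q = - c (p - q) := by
  rw [zf, if_neg (by omega), Nat.dist_comm, Nat.dist_eq_sub_of_le h.le]

lemma zf_antisymm (c : ℕ → ℝ) {p q : ℕ} (h : p ≠ q) : zf c q p = - zf c p q := by
  rcases lt_or_gt_of_ne h with h' | h'
  · rw [zf_gt c h', zf_lt c h']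
  · rw [zf_lt c h', zf_gt c h', neg_neg]

/-- Icc 1 k sums as range sums -/
lemma sum_Icc_one (k : ℕ) (f : ℕ → ℝ) :
    ∑ h ∈ Icc 1 k, f h = ∑ i ∈ range k, f (i + 1) := by
  rw [← Finset.Ico_add_one_right_eq_Icc, Finset.sum_Ico_eq_sum_range]
  simp [add_comm]

/-- counting swap: `∑_{p<m} ∑_{j<m-1-p} g j = ∑_{j<m-1} (m-1-j) g j`. -/
lemma swap_count (m : ℕ) (g : ℕ → ℝ) :
    ∑ p ∈ range m, ∑ j ∈ range (m - 1 - p), g j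
      = ∑ j ∈ range (m - 1), ((m - 1 - j : ℕ) : ℝ) * g j := by
  have h1 : ∀ p ∈ range m, ∑ j ∈ range (m - 1 - p), g j
      = ∑ j ∈ range m, if j < m - 1 - p then g j else 0 := by
    intro p _
    rw [← Finset.sum_filter]
    congr 1
    ext j; simp only [mem_filter, mem_range]
    omega
  rw [Finset.sum_congr rfl h1, Finset.sum_comm]
  have h2 : ∀ j ∈ range m, ∑ p ∈ range m, (if j < m - 1 - p then g j else 0)
      = ((m - 1 - j : ℕ) : ℝ) * g j := by
    intro j _
    rw [← Finset.sum_filter, Finset.sum_const, nsmul_eq_mul]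
    congr 2
    rw [show (range m).filter (fun p => j < m - 1 - p) = range (m - 1 - j) by
      ext p; simp only [mem_filter, mem_range]; omega]
    exact card_range _
  rw [Finset.sum_congr rfl h2]
  refine (Finset.sum_subset (Finset.range_subset_range.2 (show m - 1 ≤ m by omega)) ?_).symm
  intro j hj hj'
  simp only [mem_range] at hj hj'
  have h0 : m - 1 - j = 0 := by omega
  rw [h0]; simp

/-- square expansion: `(∑ g)² - ∑ g² = 2 ∑_{j<K} ∑_{i<j} g i g j`. -/
lemma sq_sub_sq (K : ℕ) (g : ℕ → ℝ) :
    (∑ i ∈ range K, g i)^2 - ∑ i ∈ range K, (g i)^2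
      = 2 * ∑ j ∈ range K, ∑ i ∈ range j, g i * g j := by
  induction K with
  | zero => simp
  | succ n ih =>
    rw [Finset.sum_range_succ, Finset.sum_range_succ, Finset.sum_range_succ (fun j => ∑ i ∈ range j, g i * g j)]
    rw [← Finset.sum_mul]
    nlinarith [ih]


lemma split_erase (m p : ℕ) (hp : p < m) (g : ℕ → ℝ) :
    ∑ q ∈ range m, (if p ≠ q then g q else 0)
      = ∑ q ∈ range p, g q + ∑ q ∈ Ico (p+1) m, g q := by
  rw [← Finset.sum_filter]
  rw [show (range m).filter (fun q => p ≠ q) = range p ∪ Ico (p+1) m by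
    ext q; simp only [mem_filter, mem_range, mem_union, mem_Ico]; omega]
  exact Finset.sum_union (by
    rw [Finset.disjoint_left]; intro q hq hq'
    simp only [mem_range] at hq; simp only [mem_Ico] at hq'; omega)

lemma sum_range_sub_eq (p : ℕ) (f : ℕ → ℝ) :
    ∑ q ∈ range p, f (p - q) = ∑ i ∈ range p, f (i + 1) := by
  have h := Finset.sum_range_reflect (fun j => f (j + 1)) p
  rw [← h]
  exact Finset.sum_congr rfl (fun q hq => by
    simp only [mem_range] at hq; congr 1; omega)

lemma sum_Ico_sub_eq (p m : ℕ) (f : ℕ → ℝ) :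
    ∑ q ∈ Ico (p+1) m, f (q - p) = ∑ i ∈ range (m - 1 - p), f (i + 1) := by
  rw [Finset.sum_Ico_eq_sum_range, show m - (p+1) = m - 1 - p by omega]
  exact Finset.sum_congr rfl (fun k _ => by congr 1; omega)

lemma combA (m : ℕ) (c : ℕ → ℝ) :
    ∑ p ∈ range m, ∑ q ∈ range m, (if p ≠ q then (c (Nat.dist p q))^2 else 0)
      = 2 * ∑ h ∈ Icc 1 (m-1), ((m:ℝ) - (h:ℝ)) * (c h)^2 := by
  have key : ∀ p ∈ range m,
      ∑ q ∈ range m, (if p ≠ q then (c (Nat.dist p q))^2 else 0)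
        = ∑ i ∈ range p, (c (i+1))^2 + ∑ i ∈ range (m - 1 - p), (c (i+1))^2 := by
    intro p hp
    simp only [mem_range] at hp
    rw [split_erase m p hp]
    congr 1
    · rw [← sum_range_sub_eq p (fun h => (c h)^2)]
      exact Finset.sum_congr rfl (fun q hq => by
        simp only [mem_range] at hq
        rw [Nat.dist_comm, Nat.dist_eq_sub_of_le hq.le])
    · rw [← sum_Ico_sub_eq p m (fun h => (c h)^2)]
      exact Finset.sum_congr rfl (fun q hq => by
        simp only [mem_Ico] at hq
        rw [Nat.dist_eq_sub_of_le (by omega)])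
  rw [Finset.sum_congr rfl key, Finset.sum_add_distrib]
  have refl1 : ∑ p ∈ range m, ∑ i ∈ range p, (c (i+1))^2
      = ∑ p ∈ range m, ∑ i ∈ range (m - 1 - p), (c (i+1))^2 := by
    rw [← Finset.sum_range_reflect (fun p => ∑ i ∈ range p, (c (i+1))^2) m]
  rw [refl1, ← two_mul, swap_count m (fun i => (c (i+1))^2), sum_Icc_one]
  congr 1
  exact Finset.sum_congr rfl (fun i hi => by
    simp only [mem_range] at hi
    congr 1
    push_cast [Nat.cast_sub (show i ≤ m - 1 by omega), Nat.cast_sub (show 1 ≤ m by omega)]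
    ring)



lemma E1 (m : ℕ) (c : ℕ → ℝ) :
    ∑ p ∈ range m, ((∑ i ∈ range (m - 1 - p), c (i+1))^2
        - ∑ i ∈ range (m - 1 - p), (c (i+1))^2)
      = 2 * ∑ h1 ∈ Icc 1 (m-1), ∑ h2 ∈ Icc 1 (m-1-h1),
          ((m:ℝ) - (h1:ℝ) - (h2:ℝ)) * (c h1 * c (h1+h2)) := by
  have step1 : ∀ p ∈ range m,
      ((∑ i ∈ range (m - 1 - p), c (i+1))^2 - ∑ i ∈ range (m - 1 - p), (c (i+1))^2)
        = 2 * ∑ j ∈ range (m - 1 - p), ∑ i ∈ range j, c (i+1) * c (j+1) := by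
    intro p _
    exact sq_sub_sq (m - 1 - p) (fun i => c (i+1))
  rw [Finset.sum_congr rfl step1, ← Finset.mul_sum,
    swap_count m (fun j => ∑ i ∈ range j, c (i+1) * c (j+1))]
  congr 1
  rw [sum_Icc_one (m-1) (fun h1 => ∑ h2 ∈ Icc 1 (m-1-h1),
    ((m:ℝ) - (h1:ℝ) - (h2:ℝ)) * (c h1 * c (h1+h2)))]
  have inner : ∀ u ∈ range (m-1),
      (∑ h2 ∈ Icc 1 (m-1-(u+1)), ((m:ℝ) - ((u+1:ℕ):ℝ) - (h2:ℝ)) * (c (u+1) * c ((u+1)+h2)))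
        = ∑ t ∈ range (m-1-(u+1)),
            ((m:ℝ) - ((u+1:ℕ):ℝ) - ((t+1:ℕ):ℝ)) * (c (u+1) * c ((u+1)+(t+1))) := by
    intro u _
    exact sum_Icc_one (m-1-(u+1)) (fun h2 => ((m:ℝ) - ((u+1:ℕ):ℝ) - (h2:ℝ)) * (c (u+1) * c ((u+1)+h2)))
  rw [Finset.sum_congr rfl inner]
  -- now a sigma bijection
  have lhs' : ∀ j ∈ range (m-1), ((m - 1 - j : ℕ) : ℝ) * ∑ i ∈ range j, c (i+1) * c (j+1)
      = ∑ i ∈ range j, ((m - 1 - j : ℕ) : ℝ) * (c (i+1) * c (j+1)) := fun j _ => Finset.mul_sum _ _ _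
  rw [Finset.sum_congr rfl lhs']
  rw [Finset.sum_sigma' (range (m-1)) (fun j => range j)
    (fun j i => ((m - 1 - j : ℕ) : ℝ) * (c (i+1) * c (j+1)))]
  rw [Finset.sum_sigma' (range (m-1)) (fun u => range (m-1-(u+1)))
    (fun u t => ((m:ℝ) - ((u+1:ℕ):ℝ) - ((t+1:ℕ):ℝ)) * (c (u+1) * c ((u+1)+(t+1))))]
  refine Finset.sum_bij' (fun x _ => ⟨x.2, x.1 - x.2 - 1⟩) (fun y _ => ⟨y.1 + y.2 + 1, y.1⟩)
    ?_ ?_ ?_ ?_ ?_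
  · intro a ha
    simp only [mem_sigma, mem_range] at ha ⊢
    omega
  · intro a ha
    simp only [mem_sigma, mem_range] at ha ⊢
    omega
  · intro a ha
    simp only [mem_sigma, mem_range] at ha
    obtain ⟨j, i⟩ := a
    simp only at ha ⊢
    congr <;> omega
  · intro a ha
    simp only [mem_sigma, mem_range] at ha
    obtain ⟨u, t⟩ := a
    simp only at ha ⊢
    congr <;> omega
  · intro a ha
    simp only [mem_sigma, mem_range] at ha
    obtain ⟨j, i⟩ := a
    simp only at ha ⊢
    have e1 : i + 1 + (i + (j - i - 1) + 2) - (i + 1) = j + 1 := by omega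
    have e2 : (i + 1) + ((j - i - 1) + 1) = j + 1 := by omega
    rw [e2]
    have hc : ((m - 1 - j : ℕ) : ℝ) = (m:ℝ) - ((i+1:ℕ):ℝ) - ((j - i - 1 + 1 : ℕ):ℝ) := by
      have e3 : (j - i - 1 + 1 : ℕ) = j - i := by omega
      rw [e3, Nat.cast_sub (show j ≤ m - 1 by omega), Nat.cast_sub (show 1 ≤ m by omega),
        Nat.cast_sub (show i ≤ j by omega)]
      push_cast; ring
    rw [hc]

lemma E3 (m : ℕ) (c : ℕ → ℝ) :
    ∑ p ∈ range m, ((∑ i ∈ range (m - 1 - p), c (i+1)) * (∑ j ∈ range p, c (j+1)))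
      = ∑ h1 ∈ Icc 1 (m-1), ∑ h2 ∈ Icc 1 (m-1-h1),
          ((m:ℝ) - (h1:ℝ) - (h2:ℝ)) * (c h1 * c h2) := by
  have step1 : ∀ p ∈ range m,
      (∑ i ∈ range (m - 1 - p), c (i+1)) * (∑ j ∈ range p, c (j+1))
        = ∑ i ∈ range (m - 1 - p), ∑ j ∈ range p, c (i+1) * c (j+1) := by
    intro p _
    rw [Finset.sum_mul_sum]
  rw [Finset.sum_congr rfl step1]
  -- RHS to range & counting form
  rw [sum_Icc_one (m-1) (fun h1 => ∑ h2 ∈ Icc 1 (m-1-h1),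
    ((m:ℝ) - (h1:ℝ) - (h2:ℝ)) * (c h1 * c h2))]
  have inner : ∀ u ∈ range (m-1),
      (∑ h2 ∈ Icc 1 (m-1-(u+1)), ((m:ℝ) - ((u+1:ℕ):ℝ) - (h2:ℝ)) * (c (u+1) * c h2))
        = ∑ t ∈ range (m-1-(u+1)), ∑ p' ∈ range (m-1-(u+1)-(t+1)+1),
            c (u+1) * c (t+1) := by
    intro u hu
    simp only [mem_range] at hu
    rw [sum_Icc_one (m-1-(u+1)) (fun h2 => ((m:ℝ) - ((u+1:ℕ):ℝ) - (h2:ℝ)) * (c (u+1) * c h2))]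
    refine Finset.sum_congr rfl (fun t ht => ?_)
    simp only [mem_range] at ht
    rw [Finset.sum_const, card_range, nsmul_eq_mul]
    congr 1
    rw [show (m-1-(u+1)-(t+1)+1 : ℕ) = m - (u+1) - (t+1) by omega,
      Nat.cast_sub (show t+1 ≤ m - (u+1) by omega), Nat.cast_sub (show u+1 ≤ m by omega)]
  rw [Finset.sum_congr rfl inner]
  -- triple sigma bijection
  rw [Finset.sum_sigma' (range m) (fun p => range (m-1-p))
    (fun p i => ∑ j ∈ range p, c (i+1) * c (j+1))]
  rw [Finset.sum_sigma' ((range m).sigma (fun p => range (m-1-p)))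
    (fun x => range x.1) (fun x j => c (x.2+1) * c (j+1))]
  rw [Finset.sum_sigma' (range (m-1)) (fun u => range (m-1-(u+1)))
    (fun u t => ∑ p' ∈ range (m-1-(u+1)-(t+1)+1), c (u+1) * c (t+1))]
  rw [Finset.sum_sigma' ((range (m-1)).sigma (fun u => range (m-1-(u+1))))
    (fun y => range (m-1-(y.1+1)-(y.2+1)+1)) (fun y _ => c (y.1+1) * c (y.2+1))]
  refine Finset.sum_bij' (fun x _ => ⟨⟨x.2, x.1.2⟩, x.1.1 - 1 - x.2⟩)
    (fun y _ => ⟨⟨y.2 + y.1.1 + 1, y.1.2⟩, y.1.1⟩) ?_ ?_ ?_ ?_ ?_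
  · intro a ha
    simp only [mem_sigma, mem_range] at ha ⊢
    omega
  · intro a ha
    simp only [mem_sigma, mem_range] at ha ⊢
    omega
  · intro a ha
    simp only [mem_sigma, mem_range] at ha
    obtain ⟨⟨p, i⟩, j⟩ := a
    simp only at ha ⊢
    congr <;> omega
  · intro a ha
    simp only [mem_sigma, mem_range] at ha
    obtain ⟨⟨u, t⟩, p'⟩ := a
    simp only at ha ⊢
    congr <;> omega
  · intro a ha
    simp only [mem_sigma, mem_range] at ha
    obtain ⟨⟨p, i⟩, j⟩ := a
    simp only at ha ⊢
    ring

lemma pair_offdiag (s : Finset ℕ) (g : ℕ → ℝ) :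
    ∑ q ∈ s, ∑ r ∈ s, (if q ≠ r then g q * g r else 0)
      = (∑ q ∈ s, g q)^2 - ∑ q ∈ s, (g q)^2 := by
  have inner : ∀ q ∈ s, ∑ r ∈ s, (if q ≠ r then g q * g r else 0)
      = g q * (∑ r ∈ s, g r) - (g q)^2 := by
    intro q hq
    have : ∀ r ∈ s, (if q ≠ r then g q * g r else 0)
        = g q * g r - (if q = r then g q * g r else 0) := by
      intro r _
      by_cases h : q = r <;> simp [h]
    rw [Finset.sum_congr rfl this, Finset.sum_sub_distrib, Finset.sum_ite_eq s q (fun r => g q * g r),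
      if_pos hq, ← Finset.mul_sum]
    ring
  rw [Finset.sum_congr rfl inner, Finset.sum_sub_distrib, ← Finset.sum_mul]
  ring

lemma combB (m : ℕ) (c : ℕ → ℝ) :
    ∑ p ∈ range m, ∑ q ∈ range m, ∑ r ∈ range m,
        (if p ≠ q ∧ p ≠ r ∧ q ≠ r then zf c p q * zf c p r else 0)
      = 2 * ∑ h1 ∈ Icc 1 (m-1), ∑ h2 ∈ Icc 1 (m-1-h1),
          ((m:ℝ) - (h1:ℝ) - (h2:ℝ)) * c h1 * (2 * c (h1+h2) - c h2) := by
  -- step 1: inner double sum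
  have key : ∀ p ∈ range m,
      ∑ q ∈ range m, ∑ r ∈ range m,
          (if p ≠ q ∧ p ≠ r ∧ q ≠ r then zf c p q * zf c p r else 0)
        = ((∑ i ∈ range (m-1-p), c (i+1)) - (∑ j ∈ range p, c (j+1)))^2
          - ((∑ i ∈ range (m-1-p), (c (i+1))^2) + (∑ j ∈ range p, (c (j+1))^2)) := by
    intro p hp
    simp only [mem_range] at hp
    set s : Finset ℕ := (range m).filter (fun q => p ≠ q) with hs
    have hstep : ∑ q ∈ range m, ∑ r ∈ range m,
          (if p ≠ q ∧ p ≠ r ∧ q ≠ r then zf c p q * zf c p r else 0)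
        = ∑ q ∈ s, ∑ r ∈ s, (if q ≠ r then zf c p q * zf c p r else 0) := by
      rw [hs, Finset.sum_filter]
      refine Finset.sum_congr rfl (fun q _ => ?_)
      by_cases hq : p ≠ q
      · simp only [if_pos hq]
        rw [Finset.sum_filter]
        refine Finset.sum_congr rfl (fun r _ => ?_)
        by_cases hr : p ≠ r
        · simp [hq, hr]
        · simp [hq, hr]
      · simp only [if_neg hq]
        refine Finset.sum_eq_zero (fun r _ => ?_)
        simp [hq]
    rw [hstep, pair_offdiag s (zf c p)]
    have hsum : ∑ q ∈ s, zf c p q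
        = (∑ i ∈ range (m-1-p), c (i+1)) - (∑ j ∈ range p, c (j+1)) := by
      rw [hs, Finset.sum_filter, split_erase m p hp]
      have h1 : ∑ q ∈ range p, zf c p q = - ∑ j ∈ range p, c (j+1) := by
        have e : ∀ q ∈ range p, zf c p q = - c (p - q) :=
          fun q hq => zf_gt c (mem_range.1 hq)
        rw [Finset.sum_congr rfl e, sum_range_sub_eq p (fun h => - c h)]
        simp
      have h2 : ∑ q ∈ Ico (p+1) m, zf c p q = ∑ i ∈ range (m-1-p), c (i+1) := by
        rw [← sum_Ico_sub_eq p m c]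
        refine Finset.sum_congr rfl (fun q hq => ?_)
        simp only [mem_Ico] at hq
        rw [zf_lt c (by omega)]
      rw [h1, h2]; ring
    have hsq : ∑ q ∈ s, (zf c p q)^2
        = (∑ i ∈ range (m-1-p), (c (i+1))^2) + (∑ j ∈ range p, (c (j+1))^2) := by
      rw [hs, Finset.sum_filter, split_erase m p hp]
      have h1 : ∑ q ∈ range p, (zf c p q)^2 = ∑ j ∈ range p, (c (j+1))^2 := by
        rw [← sum_range_sub_eq p (fun h => (c h)^2)]
        refine Finset.sum_congr rfl (fun q hq => ?_)
        simp only [mem_range] at hq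
        rw [zf_gt c hq]; ring
      have h2 : ∑ q ∈ Ico (p+1) m, (zf c p q)^2 = ∑ i ∈ range (m-1-p), (c (i+1))^2 := by
        rw [← sum_Ico_sub_eq p m (fun h => (c h)^2)]
        refine Finset.sum_congr rfl (fun q hq => ?_)
        simp only [mem_Ico] at hq
        rw [zf_lt c (by omega)]
      rw [h1, h2]; ring
    rw [hsum, hsq]
  rw [Finset.sum_congr rfl key]
  -- step 2: split into three sums
  have expand : ∀ p ∈ range m,
      ((∑ i ∈ range (m-1-p), c (i+1)) - (∑ j ∈ range p, c (j+1)))^2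
          - ((∑ i ∈ range (m-1-p), (c (i+1))^2) + (∑ j ∈ range p, (c (j+1))^2))
        = ((∑ i ∈ range (m-1-p), c (i+1))^2 - ∑ i ∈ range (m-1-p), (c (i+1))^2)
          + ((∑ j ∈ range p, c (j+1))^2 - ∑ j ∈ range p, (c (j+1))^2)
          - 2 * ((∑ i ∈ range (m-1-p), c (i+1)) * (∑ j ∈ range p, c (j+1))) := by
    intro p _; ring
  rw [Finset.sum_congr rfl expand, Finset.sum_sub_distrib, Finset.sum_add_distrib]
  have refl1 : ∑ p ∈ range m, ((∑ j ∈ range p, c (j+1))^2 - ∑ j ∈ range p, (c (j+1))^2)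
      = ∑ p ∈ range m, ((∑ i ∈ range (m-1-p), c (i+1))^2 - ∑ i ∈ range (m-1-p), (c (i+1))^2) := by
    rw [← Finset.sum_range_reflect
      (fun p => (∑ j ∈ range p, c (j+1))^2 - ∑ j ∈ range p, (c (j+1))^2) m]
  rw [refl1, E1 m c, ← Finset.mul_sum, E3 m c]
  have final : ∑ h1 ∈ Icc 1 (m-1), ∑ h2 ∈ Icc 1 (m-1-h1),
        ((m:ℝ) - (h1:ℝ) - (h2:ℝ)) * c h1 * (2 * c (h1+h2) - c h2)
      = 2 * (∑ h1 ∈ Icc 1 (m-1), ∑ h2 ∈ Icc 1 (m-1-h1),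
            ((m:ℝ) - (h1:ℝ) - (h2:ℝ)) * (c h1 * c (h1+h2)))
        - ∑ h1 ∈ Icc 1 (m-1), ∑ h2 ∈ Icc 1 (m-1-h1),
            ((m:ℝ) - (h1:ℝ) - (h2:ℝ)) * (c h1 * c h2) := by
    rw [Finset.mul_sum, ← Finset.sum_sub_distrib]
    refine Finset.sum_congr rfl (fun h1 _ => ?_)
    rw [Finset.mul_sum, ← Finset.sum_sub_distrib]
    refine Finset.sum_congr rfl (fun h2 _ => ?_); ring
  rw [final]; ring


section Perm
open Equiv

lemma exists_perm_pair {m : ℕ} {u v u' v' : Fin m} (huv : u ≠ v) (h' : u' ≠ v') :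
    ∃ σ : Equiv.Perm (Fin m), σ u = u' ∧ σ v = v' := by
  classical
  set σ₁ := Equiv.swap u u' with hσ₁
  have h1 : σ₁ u = u' := Equiv.swap_apply_left u u'
  have hv : σ₁ v ≠ u' := by
    intro h
    exact huv (σ₁.injective (h.trans h1.symm)).symm
  refine ⟨Equiv.swap (σ₁ v) v' * σ₁, ?_, ?_⟩
  · rw [Equiv.Perm.mul_apply, h1, Equiv.swap_apply_of_ne_of_ne (Ne.symm hv) h']
  · rw [Equiv.Perm.mul_apply, Equiv.swap_apply_left]

lemma exists_perm_triple {m : ℕ} {u v w u' v' w' : Fin m} (huv : u ≠ v) (huw : u ≠ w)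
    (hvw : v ≠ w) (h1 : u' ≠ v') (h2 : u' ≠ w') (h3 : v' ≠ w') :
    ∃ σ : Equiv.Perm (Fin m), σ u = u' ∧ σ v = v' ∧ σ w = w' := by
  classical
  obtain ⟨σ₂, h2u, h2v⟩ := exists_perm_pair huv h1
  have hw1 : σ₂ w ≠ u' := fun h => huw (σ₂.injective (h.trans h2u.symm)).symm
  have hw2 : σ₂ w ≠ v' := fun h => hvw (σ₂.injective (h.trans h2v.symm)).symm
  refine ⟨Equiv.swap (σ₂ w) w' * σ₂, ?_, ?_, ?_⟩
  · rw [Equiv.Perm.mul_apply, h2u, Equiv.swap_apply_of_ne_of_ne (Ne.symm hw1) h2]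
  · rw [Equiv.Perm.mul_apply, h2v, Equiv.swap_apply_of_ne_of_ne (Ne.symm hw2) h3]
  · rw [Equiv.Perm.mul_apply, Equiv.swap_apply_left]

/-- `ζ(a,u,v)` : the signed `c`-distance between the positions of `u` and `v`. -/
noncomputable def zeta {m : ℕ} (c : ℕ → ℝ) (a : Equiv.Perm (Fin m)) (u v : Fin m) : ℝ :=
  zf c (a.symm u : ℕ) (a.symm v : ℕ)

lemma z_eq_zeta {m : ℕ} (c : ℕ → ℝ) (a : Equiv.Perm (Fin m)) (ij : Pairs m) :
    z c a ij = zeta c a ij.1.1 ij.1.2 := rfl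

lemma zeta_mul_left {m : ℕ} (c : ℕ → ℝ) (σ a : Equiv.Perm (Fin m)) (u v : Fin m) :
    zeta c (σ * a) (σ u) (σ v) = zeta c a u v := by
  have h : ∀ x, (σ * a).symm (σ x) = a.symm x := fun x => by
    simp [Equiv.Perm.mul_def]
  simp only [zeta, h]

lemma zeta_antisymm {m : ℕ} (c : ℕ → ℝ) (a : Equiv.Perm (Fin m)) {u v : Fin m}
    (huv : u ≠ v) : zeta c a v u = - zeta c a u v := by
  refine zf_antisymm c (fun h => huv ?_)
  exact a.symm.injective (Fin.val_injective h)

lemma sum_zeta_eq_zero {m : ℕ} (c : ℕ → ℝ) {u v : Fin m} (huv : u ≠ v) :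
    ∑ a : Equiv.Perm (Fin m), zeta c a u v = 0 := by
  classical
  have h := Equiv.sum_comp (Equiv.mulLeft (Equiv.swap u v)) (fun a => zeta c a u v)
  simp only [Equiv.coe_mulLeft] at h
  have e : ∀ a : Equiv.Perm (Fin m), zeta c (Equiv.swap u v * a) u v = - zeta c a u v := by
    intro a
    have h1 : zeta c (Equiv.swap u v * a) u v
        = zeta c (Equiv.swap u v * a) (Equiv.swap u v v) (Equiv.swap u v u) := by
      rw [Equiv.swap_apply_left, Equiv.swap_apply_right]
    rw [h1, zeta_mul_left, zeta_antisymm c a huv]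
  rw [Finset.sum_congr rfl (fun a _ => e a), Finset.sum_neg_distrib] at h
  linarith

lemma sum_zeta_mul_disjoint {m : ℕ} (c : ℕ → ℝ) {u v u' v' : Fin m} (huv : u ≠ v)
    (h1 : u' ≠ u) (h2 : u' ≠ v) (h3 : v' ≠ u) (h4 : v' ≠ v) :
    ∑ a : Equiv.Perm (Fin m), zeta c a u v * zeta c a u' v' = 0 := by
  classical
  have h := Equiv.sum_comp (Equiv.mulLeft (Equiv.swap u v))
    (fun a => zeta c a u v * zeta c a u' v')
  simp only [Equiv.coe_mulLeft] at h
  have e : ∀ a : Equiv.Perm (Fin m),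
      zeta c (Equiv.swap u v * a) u v * zeta c (Equiv.swap u v * a) u' v'
        = - (zeta c a u v * zeta c a u' v') := by
    intro a
    have e1 : zeta c (Equiv.swap u v * a) u v
        = zeta c (Equiv.swap u v * a) (Equiv.swap u v v) (Equiv.swap u v u) := by
      rw [Equiv.swap_apply_left, Equiv.swap_apply_right]
    have e2 : zeta c (Equiv.swap u v * a) u' v'
        = zeta c (Equiv.swap u v * a) (Equiv.swap u v u') (Equiv.swap u v v') := by
      rw [Equiv.swap_apply_of_ne_of_ne h1 h2, Equiv.swap_apply_of_ne_of_ne h3 h4]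
    rw [e1, e2, zeta_mul_left, zeta_mul_left, zeta_antisymm c a huv]
    ring
  rw [Finset.sum_congr rfl (fun a _ => e a), Finset.sum_neg_distrib] at h
  linarith


lemma count_pair {m : ℕ} (hm : 1 ≤ m) (K : ℝ) :
    ∑ p : Fin m, ∑ q : Fin m, (if p ≠ q then K else 0) = ((m:ℝ) * ((m:ℝ) - 1)) * K := by
  classical
  have inner : ∀ p : Fin m, ∑ q : Fin m, (if p ≠ q then K else 0) = ((m:ℝ) - 1) * K := by
    intro p
    rw [← Finset.sum_filter, Finset.sum_const, nsmul_eq_mul]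
    congr 1
    rw [show (univ : Finset (Fin m)).filter (fun q => p ≠ q) = univ.erase p by
      ext q; simp [mem_erase, ne_comm, eq_comm, and_comm]]
    rw [Finset.card_erase_of_mem (mem_univ p), Finset.card_univ, Fintype.card_fin,
      Nat.cast_sub hm, Nat.cast_one]
  rw [Finset.sum_congr rfl (fun p _ => inner p), Finset.sum_const, nsmul_eq_mul,
    Finset.card_univ, Fintype.card_fin]
  ring

lemma count_triple {m : ℕ} (hm : 2 ≤ m) (K : ℝ) :
    ∑ p : Fin m, ∑ q : Fin m, ∑ r : Fin m, (if p ≠ q ∧ p ≠ r ∧ q ≠ r then K else 0)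
      = ((m:ℝ) * ((m:ℝ) - 1) * ((m:ℝ) - 2)) * K := by
  classical
  have inner2 : ∀ p q : Fin m, p ≠ q →
      ∑ r : Fin m, (if p ≠ q ∧ p ≠ r ∧ q ≠ r then K else 0) = ((m:ℝ) - 2) * K := by
    intro p q hpq
    have e : ∀ r : Fin m, (if p ≠ q ∧ p ≠ r ∧ q ≠ r then K else 0)
        = (if p ≠ r ∧ q ≠ r then K else 0) := by
      intro r
      by_cases h : p ≠ r ∧ q ≠ r
      · rw [if_pos ⟨hpq, h.1, h.2⟩, if_pos h]
      · rw [if_neg (fun h' => h ⟨h'.2.1, h'.2.2⟩), if_neg h]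
    rw [Finset.sum_congr rfl (fun r _ => e r), ← Finset.sum_filter, Finset.sum_const,
      nsmul_eq_mul]
    congr 1
    rw [show (univ : Finset (Fin m)).filter (fun r => p ≠ r ∧ q ≠ r)
        = ({p, q} : Finset (Fin m))ᶜ by
      ext r; simp [not_or, eq_comm]]
    rw [Finset.card_compl, Fintype.card_fin,
      Finset.card_insert_of_notMem (by simp [hpq]), Finset.card_singleton,
      Nat.cast_sub hm]
    norm_num
  have inner1 : ∀ p : Fin m,
      ∑ q : Fin m, ∑ r : Fin m, (if p ≠ q ∧ p ≠ r ∧ q ≠ r then K else 0)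
        = ((m:ℝ) - 1) * (((m:ℝ) - 2) * K) := by
    intro p
    have e : ∀ q : Fin m,
        ∑ r : Fin m, (if p ≠ q ∧ p ≠ r ∧ q ≠ r then K else 0)
          = (if p ≠ q then ((m:ℝ) - 2) * K else 0) := by
      intro q
      by_cases h : p ≠ q
      · rw [if_pos h, inner2 p q h]
      · rw [if_neg h]
        refine Finset.sum_eq_zero (fun r _ => ?_)
        rw [if_neg (fun h' => h h'.1)]
    rw [Finset.sum_congr rfl (fun q _ => e q), ← Finset.sum_filter, Finset.sum_const,
      nsmul_eq_mul]
    congr 1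
    rw [show (univ : Finset (Fin m)).filter (fun q => p ≠ q) = univ.erase p by
      ext q; simp [mem_erase, ne_comm, eq_comm, and_comm]]
    rw [Finset.card_erase_of_mem (mem_univ p), Finset.card_univ, Fintype.card_fin,
      Nat.cast_sub (by omega : 1 ≤ m), Nat.cast_one]
  rw [Finset.sum_congr rfl (fun p _ => inner1 p), Finset.sum_const, nsmul_eq_mul,
    Finset.card_univ, Fintype.card_fin]
  ring

lemma card_perm_fin (m : ℕ) :
    (Finset.univ : Finset (Equiv.Perm (Fin m))).card = m.factorial := by
  rw [Finset.card_univ, Fintype.card_perm, Fintype.card_fin]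

set_option maxHeartbeats 1000000 in
lemma avg2 {m : ℕ} (hm : 1 ≤ m) (F : Fin m → Fin m → ℝ) {u v : Fin m} (huv : u ≠ v) :
    ((m:ℝ) * ((m:ℝ) - 1)) * ∑ a : Equiv.Perm (Fin m), F (a u) (a v)
      = (m.factorial : ℝ) * ∑ p : Fin m, ∑ q : Fin m, (if p ≠ q then F p q else 0) := by
  classical
  have indep : ∀ p q : Fin m, p ≠ q →
      ∑ a : Equiv.Perm (Fin m), F (a p) (a q)
        = ∑ a : Equiv.Perm (Fin m), F (a u) (a v) := by
    intro p q hpq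
    obtain ⟨σ, h1, h2⟩ := exists_perm_pair huv hpq
    calc ∑ a : Equiv.Perm (Fin m), F (a p) (a q)
        = ∑ a : Equiv.Perm (Fin m), F ((a * σ) u) ((a * σ) v) := by
          refine Finset.sum_congr rfl (fun a _ => ?_)
          rw [Equiv.Perm.mul_apply, Equiv.Perm.mul_apply, h1, h2]
      _ = ∑ a : Equiv.Perm (Fin m), F (a u) (a v) :=
          Equiv.sum_comp (Equiv.mulRight σ) (fun a => F (a u) (a v))
  calc ((m:ℝ) * ((m:ℝ) - 1)) * ∑ a : Equiv.Perm (Fin m), F (a u) (a v)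
      = ∑ p : Fin m, ∑ q : Fin m,
          (if p ≠ q then (∑ a : Equiv.Perm (Fin m), F (a p) (a q)) else 0) := by
        have step' : ∑ p : Fin m, ∑ q : Fin m,
            (if p ≠ q then (∑ a : Equiv.Perm (Fin m), F (a p) (a q)) else 0)
          = ∑ p : Fin m, ∑ q : Fin m,
            (if p ≠ q then (∑ a : Equiv.Perm (Fin m), F (a u) (a v)) else 0) := by
          refine Finset.sum_congr rfl (fun p _ => Finset.sum_congr rfl (fun q _ => ?_))
          by_cases h : p ≠ q
          · rw [if_pos h, if_pos h, indep p q h]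
          · rw [if_neg h, if_neg h]
        rw [step', count_pair hm]
    _ = ∑ a : Equiv.Perm (Fin m), ∑ p : Fin m, ∑ q : Fin m,
          (if p ≠ q then F (a p) (a q) else 0) := by
        have e : ∀ p q : Fin m,
            (if p ≠ q then (∑ a : Equiv.Perm (Fin m), F (a p) (a q)) else 0)
              = ∑ a : Equiv.Perm (Fin m), (if p ≠ q then F (a p) (a q) else 0) := by
          intro p q
          by_cases h : p ≠ q
          · simp [h]
          · simp [h]
        rw [Finset.sum_congr rfl (fun p _ => Finset.sum_congr rfl (fun q _ => e p q))]
        have swap1 : ∀ p : Fin m,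
            ∑ q : Fin m, ∑ a : Equiv.Perm (Fin m), (if p ≠ q then F (a p) (a q) else 0)
              = ∑ a : Equiv.Perm (Fin m), ∑ q : Fin m, (if p ≠ q then F (a p) (a q) else 0) :=
          fun p => Finset.sum_comm
        rw [Finset.sum_congr rfl (fun p _ => swap1 p)]
        exact Finset.sum_comm
    _ = ∑ a : Equiv.Perm (Fin m), ∑ p : Fin m, ∑ q : Fin m,
          (if p ≠ q then F p q else 0) := by
        refine Finset.sum_congr rfl (fun a _ => ?_)
        have step1 : ∀ p : Fin m, ∑ q : Fin m, (if p ≠ q then F (a p) (a q) else 0)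
            = ∑ q : Fin m, (if a p ≠ q then F (a p) q else 0) := by
          intro p
          rw [← Equiv.sum_comp a (fun y => if a p ≠ y then F (a p) y else 0)]
          refine Finset.sum_congr rfl (fun q _ => ?_)
          simp only [ne_eq, EmbeddingLike.apply_eq_iff_eq]
        rw [Finset.sum_congr rfl (fun p _ => step1 p)]
        exact Equiv.sum_comp a (fun x => ∑ q : Fin m, (if x ≠ q then F x q else 0))
    _ = (m.factorial : ℝ) * ∑ p : Fin m, ∑ q : Fin m, (if p ≠ q then F p q else 0) := by
        rw [Finset.sum_const, card_perm_fin, nsmul_eq_mul]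


set_option maxHeartbeats 1000000 in
lemma avg3 {m : ℕ} (hm : 2 ≤ m) (F : Fin m → Fin m → Fin m → ℝ) {u v w : Fin m}
    (huv : u ≠ v) (huw : u ≠ w) (hvw : v ≠ w) :
    ((m:ℝ) * ((m:ℝ) - 1) * ((m:ℝ) - 2)) * ∑ a : Equiv.Perm (Fin m), F (a u) (a v) (a w)
      = (m.factorial : ℝ) * ∑ p : Fin m, ∑ q : Fin m, ∑ r : Fin m,
          (if p ≠ q ∧ p ≠ r ∧ q ≠ r then F p q r else 0) := by
  classical
  have indep : ∀ p q r : Fin m, p ≠ q → p ≠ r → q ≠ r →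
      ∑ a : Equiv.Perm (Fin m), F (a p) (a q) (a r)
        = ∑ a : Equiv.Perm (Fin m), F (a u) (a v) (a w) := by
    intro p q r hpq hpr hqr
    obtain ⟨σ, h1, h2, h3⟩ := exists_perm_triple huv huw hvw hpq hpr hqr
    calc ∑ a : Equiv.Perm (Fin m), F (a p) (a q) (a r)
        = ∑ a : Equiv.Perm (Fin m), F ((a * σ) u) ((a * σ) v) ((a * σ) w) := by
          refine Finset.sum_congr rfl (fun a _ => ?_)
          rw [Equiv.Perm.mul_apply, Equiv.Perm.mul_apply, Equiv.Perm.mul_apply, h1, h2, h3]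
      _ = ∑ a : Equiv.Perm (Fin m), F (a u) (a v) (a w) :=
          Equiv.sum_comp (Equiv.mulRight σ) (fun a => F (a u) (a v) (a w))
  calc ((m:ℝ) * ((m:ℝ) - 1) * ((m:ℝ) - 2)) * ∑ a : Equiv.Perm (Fin m), F (a u) (a v) (a w)
      = ∑ p : Fin m, ∑ q : Fin m, ∑ r : Fin m, (if p ≠ q ∧ p ≠ r ∧ q ≠ r then
          (∑ a : Equiv.Perm (Fin m), F (a p) (a q) (a r)) else 0) := by
        have step' : ∑ p : Fin m, ∑ q : Fin m, ∑ r : Fin m, (if p ≠ q ∧ p ≠ r ∧ q ≠ r then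
            (∑ a : Equiv.Perm (Fin m), F (a p) (a q) (a r)) else 0)
          = ∑ p : Fin m, ∑ q : Fin m, ∑ r : Fin m, (if p ≠ q ∧ p ≠ r ∧ q ≠ r then
            (∑ a : Equiv.Perm (Fin m), F (a u) (a v) (a w)) else 0) := by
          refine Finset.sum_congr rfl (fun p _ => Finset.sum_congr rfl (fun q _ =>
            Finset.sum_congr rfl (fun r _ => ?_)))
          by_cases h : p ≠ q ∧ p ≠ r ∧ q ≠ r
          · rw [if_pos h, if_pos h, indep p q r h.1 h.2.1 h.2.2]
          · rw [if_neg h, if_neg h]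
        rw [step', count_triple hm]
    _ = ∑ a : Equiv.Perm (Fin m), ∑ p : Fin m, ∑ q : Fin m, ∑ r : Fin m,
          (if p ≠ q ∧ p ≠ r ∧ q ≠ r then F (a p) (a q) (a r) else 0) := by
        have e : ∀ p q r : Fin m,
            (if p ≠ q ∧ p ≠ r ∧ q ≠ r then
              (∑ a : Equiv.Perm (Fin m), F (a p) (a q) (a r)) else 0)
              = ∑ a : Equiv.Perm (Fin m),
                  (if p ≠ q ∧ p ≠ r ∧ q ≠ r then F (a p) (a q) (a r) else 0) := by
          intro p q r
          by_cases h : p ≠ q ∧ p ≠ r ∧ q ≠ r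
          · simp [h]
          · simp [h]
        rw [Finset.sum_congr rfl (fun p _ => Finset.sum_congr rfl (fun q _ =>
          Finset.sum_congr rfl (fun r _ => e p q r)))]
        have swap2 : ∀ p q : Fin m,
            ∑ r : Fin m, ∑ a : Equiv.Perm (Fin m),
                (if p ≠ q ∧ p ≠ r ∧ q ≠ r then F (a p) (a q) (a r) else 0)
              = ∑ a : Equiv.Perm (Fin m), ∑ r : Fin m,
                (if p ≠ q ∧ p ≠ r ∧ q ≠ r then F (a p) (a q) (a r) else 0) :=
          fun p q => Finset.sum_comm
        rw [Finset.sum_congr rfl (fun p _ => Finset.sum_congr rfl (fun q _ => swap2 p q))]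
        have swap1 : ∀ p : Fin m,
            ∑ q : Fin m, ∑ a : Equiv.Perm (Fin m), ∑ r : Fin m,
                (if p ≠ q ∧ p ≠ r ∧ q ≠ r then F (a p) (a q) (a r) else 0)
              = ∑ a : Equiv.Perm (Fin m), ∑ q : Fin m, ∑ r : Fin m,
                (if p ≠ q ∧ p ≠ r ∧ q ≠ r then F (a p) (a q) (a r) else 0) :=
          fun p => Finset.sum_comm
        rw [Finset.sum_congr rfl (fun p _ => swap1 p)]
        exact Finset.sum_comm
    _ = ∑ a : Equiv.Perm (Fin m), ∑ p : Fin m, ∑ q : Fin m, ∑ r : Fin m,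
          (if p ≠ q ∧ p ≠ r ∧ q ≠ r then F p q r else 0) := by
        refine Finset.sum_congr rfl (fun a _ => ?_)
        have step2 : ∀ p q : Fin m,
            ∑ r : Fin m, (if p ≠ q ∧ p ≠ r ∧ q ≠ r then F (a p) (a q) (a r) else 0)
              = ∑ r : Fin m, (if p ≠ q ∧ a p ≠ r ∧ a q ≠ r then F (a p) (a q) r else 0) := by
          intro p q
          rw [← Equiv.sum_comp a
            (fun y => if p ≠ q ∧ a p ≠ y ∧ a q ≠ y then F (a p) (a q) y else 0)]
          refine Finset.sum_congr rfl (fun r _ => ?_)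
          simp only [ne_eq, EmbeddingLike.apply_eq_iff_eq]
        rw [Finset.sum_congr rfl (fun p _ => Finset.sum_congr rfl (fun q _ => step2 p q))]
        have step1 : ∀ p : Fin m,
            ∑ q : Fin m, ∑ r : Fin m,
                (if p ≠ q ∧ a p ≠ r ∧ a q ≠ r then F (a p) (a q) r else 0)
              = ∑ q : Fin m, ∑ r : Fin m,
                (if a p ≠ q ∧ a p ≠ r ∧ q ≠ r then F (a p) q r else 0) := by
          intro p
          rw [← Equiv.sum_comp a (fun y => ∑ r : Fin m,
            (if a p ≠ y ∧ a p ≠ r ∧ y ≠ r then F (a p) y r else 0))]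
          refine Finset.sum_congr rfl (fun q _ => Finset.sum_congr rfl (fun r _ => ?_))
          simp only [ne_eq, EmbeddingLike.apply_eq_iff_eq]
        rw [Finset.sum_congr rfl (fun p _ => step1 p)]
        exact Equiv.sum_comp a (fun x => ∑ q : Fin m, ∑ r : Fin m,
          (if x ≠ q ∧ x ≠ r ∧ q ≠ r then F x q r else 0))
    _ = (m.factorial : ℝ) * ∑ p : Fin m, ∑ q : Fin m, ∑ r : Fin m,
          (if p ≠ q ∧ p ≠ r ∧ q ≠ r then F p q r else 0) := by
        rw [Finset.sum_const, card_perm_fin, nsmul_eq_mul]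


lemma zeta_eq_inv {m : ℕ} (c : ℕ → ℝ) (a : Equiv.Perm (Fin m)) (u v : Fin m) :
    zeta c a u v = zf c ((a⁻¹ u : Fin m) : ℕ) ((a⁻¹ v : Fin m) : ℕ) := rfl

lemma sum_inv_perm {m : ℕ} (f : Equiv.Perm (Fin m) → ℝ) :
    ∑ a : Equiv.Perm (Fin m), f a⁻¹ = ∑ a : Equiv.Perm (Fin m), f a :=
  Equiv.sum_comp (Equiv.inv (Equiv.Perm (Fin m))) f

lemma mfact_ne {m : ℕ} : (m.factorial : ℝ) ≠ 0 := by
  exact_mod_cast m.factorial_ne_zero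

lemma sum_zeta_sq {m : ℕ} (hm : 3 ≤ m) (c : ℕ → ℝ) {u v : Fin m} (huv : u ≠ v) :
    ∑ a : Equiv.Perm (Fin m), (zeta c a u v)^2 = (m.factorial : ℝ) * b0 m c := by
  classical
  have inv_re : ∑ a : Equiv.Perm (Fin m), (zeta c a u v)^2
      = ∑ a : Equiv.Perm (Fin m), (zf c ((a u : Fin m) : ℕ) ((a v : Fin m) : ℕ))^2 := by
    rw [← sum_inv_perm (fun a => (zf c ((a u : Fin m) : ℕ) ((a v : Fin m) : ℕ))^2)]
    refine Finset.sum_congr rfl (fun a _ => ?_)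
    rw [zeta_eq_inv]
  have h2 := avg2 (by omega : 1 ≤ m) (fun p q => (zf c (p : ℕ) (q : ℕ))^2) huv
  have conv : ∑ p : Fin m, ∑ q : Fin m, (if p ≠ q then (zf c (p : ℕ) (q : ℕ))^2 else 0)
      = ∑ p ∈ range m, ∑ q ∈ range m, (if p ≠ q then (c (Nat.dist p q))^2 else 0) := by
    have e : ∀ p q : Fin m, (if p ≠ q then (zf c (p : ℕ) (q : ℕ))^2 else 0)
        = (if (p : ℕ) ≠ (q : ℕ) then (c (Nat.dist (p : ℕ) (q : ℕ)))^2 else 0) := by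
      intro p q
      rw [zf_sq]
      refine if_congr ?_ rfl rfl
      simp [Fin.val_eq_val]
    rw [Finset.sum_congr rfl (fun p _ => Finset.sum_congr rfl (fun q _ => e p q))]
    rw [← Fin.sum_univ_eq_sum_range (fun p => ∑ q ∈ range m,
      (if p ≠ q then (c (Nat.dist p q))^2 else 0)) m]
    refine Finset.sum_congr rfl (fun p _ => ?_)
    exact Fin.sum_univ_eq_sum_range (fun q => (if (p:ℕ) ≠ q then (c (Nat.dist (p:ℕ) q))^2 else 0)) m
  rw [conv, combA m c] at h2
  rw [inv_re]
  have hne : (m:ℝ) * ((m:ℝ) - 1) ≠ 0 := by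
    have : (3:ℝ) ≤ (m:ℝ) := by exact_mod_cast hm
    have h1 : (0:ℝ) < (m:ℝ) := by linarith
    have h2 : (0:ℝ) < (m:ℝ) - 1 := by linarith
    exact ne_of_gt (mul_pos h1 h2)
  apply mul_left_cancel₀ hne
  rw [h2, b0]
  field_simp
  have h1' : (m:ℝ) - 1 ≠ 0 := by
    have : (3:ℝ) ≤ (m:ℝ) := by exact_mod_cast hm
    linarith
  rw [eq_div_iff h1']

lemma sum_zeta_shared {m : ℕ} (hm : 3 ≤ m) (c : ℕ → ℝ) {u v w : Fin m}
    (huv : u ≠ v) (huw : u ≠ w) (hvw : v ≠ w) :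
    ∑ a : Equiv.Perm (Fin m), zeta c a u v * zeta c a u w
      = (m.factorial : ℝ) * b1 m c := by
  classical
  have inv_re : ∑ a : Equiv.Perm (Fin m), zeta c a u v * zeta c a u w
      = ∑ a : Equiv.Perm (Fin m),
          zf c ((a u : Fin m) : ℕ) ((a v : Fin m) : ℕ)
            * zf c ((a u : Fin m) : ℕ) ((a w : Fin m) : ℕ) := by
    rw [← sum_inv_perm (fun a => zf c ((a u : Fin m) : ℕ) ((a v : Fin m) : ℕ)
      * zf c ((a u : Fin m) : ℕ) ((a w : Fin m) : ℕ))]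
    refine Finset.sum_congr rfl (fun a _ => ?_)
    rw [zeta_eq_inv, zeta_eq_inv]
  have h3 := avg3 (by omega : 2 ≤ m)
    (fun p q r => zf c (p : ℕ) (q : ℕ) * zf c (p : ℕ) (r : ℕ)) huv huw hvw
  have conv : ∑ p : Fin m, ∑ q : Fin m, ∑ r : Fin m,
      (if p ≠ q ∧ p ≠ r ∧ q ≠ r then zf c (p : ℕ) (q : ℕ) * zf c (p : ℕ) (r : ℕ) else 0)
      = ∑ p ∈ range m, ∑ q ∈ range m, ∑ r ∈ range m,
          (if p ≠ q ∧ p ≠ r ∧ q ≠ r then zf c p q * zf c p r else 0) := by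
    have e : ∀ p q r : Fin m,
        (if p ≠ q ∧ p ≠ r ∧ q ≠ r then zf c (p : ℕ) (q : ℕ) * zf c (p : ℕ) (r : ℕ) else 0)
        = (if (p:ℕ) ≠ (q:ℕ) ∧ (p:ℕ) ≠ (r:ℕ) ∧ (q:ℕ) ≠ (r:ℕ)
            then zf c (p:ℕ) (q:ℕ) * zf c (p:ℕ) (r:ℕ) else 0) := by
      intro p q r
      refine if_congr ?_ rfl rfl
      simp [Fin.val_eq_val]
    rw [Finset.sum_congr rfl (fun p _ => Finset.sum_congr rfl (fun q _ =>
      Finset.sum_congr rfl (fun r _ => e p q r)))]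
    rw [← Fin.sum_univ_eq_sum_range (fun p => ∑ q ∈ range m, ∑ r ∈ range m,
      (if p ≠ q ∧ p ≠ r ∧ q ≠ r then zf c p q * zf c p r else 0)) m]
    refine Finset.sum_congr rfl (fun p _ => ?_)
    rw [← Fin.sum_univ_eq_sum_range (fun q => ∑ r ∈ range m,
      (if (p:ℕ) ≠ q ∧ (p:ℕ) ≠ r ∧ q ≠ r then zf c (p:ℕ) q * zf c (p:ℕ) r else 0)) m]
    refine Finset.sum_congr rfl (fun q _ => ?_)
    exact Fin.sum_univ_eq_sum_range (fun r =>
      (if (p:ℕ) ≠ (q:ℕ) ∧ (p:ℕ) ≠ r ∧ (q:ℕ) ≠ r then zf c (p:ℕ) (q:ℕ) * zf c (p:ℕ) r else 0)) m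
  rw [conv, combB m c] at h3
  rw [inv_re]
  have hne : (m:ℝ) * ((m:ℝ) - 1) * ((m:ℝ) - 2) ≠ 0 := by
    have : (3:ℝ) ≤ (m:ℝ) := by exact_mod_cast hm
    have h1 : (0:ℝ) < (m:ℝ) := by linarith
    have h2 : (0:ℝ) < (m:ℝ) - 1 := by linarith
    have h3 : (0:ℝ) < (m:ℝ) - 2 := by linarith
    exact ne_of_gt (mul_pos (mul_pos h1 h2) h3)
  apply mul_left_cancel₀ hne
  rw [h3, b1]
  field_simp
  have h12' : ((m:ℝ) - 1) * ((m:ℝ) - 2) ≠ 0 := by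
    have : (3:ℝ) ≤ (m:ℝ) := by exact_mod_cast hm
    exact mul_ne_zero (by linarith) (by linarith)
  rw [eq_div_iff h12']
  ring

end Perm

/-- Theorem 2, first part: `M₀ = diag(1, b₀ I_q + b₁ V)`. -/
theorem statement1 {m : ℕ} (hm : 3 ≤ m) (c : ℕ → ℝ) (hc1 : c 1 = 1)
    (hmono : ∀ h : ℕ, 1 ≤ h → h + 1 ≤ m - 1 → c (h + 1) ≤ c h)
    (hlast : 0 ≤ c (m - 1)) :
    M0 m c = Matrix.fromBlocks 1 0 0
      (b0 m c • (1 : Matrix (Pairs m) (Pairs m) ℝ) + b1 m c • V m) := by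
  classical
  have hfac : (m.factorial : ℝ) ≠ 0 := mfact_ne
  have entry : ∀ i j, M0 m c i j
      = (m.factorial : ℝ)⁻¹ * ∑ a : Equiv.Perm (Fin m), x c a i * x c a j := by
    intro i j
    rw [M0, momentMatrix, Matrix.sum_apply, Finset.mul_sum]
    refine Finset.sum_congr rfl (fun a _ => ?_)
    rw [Matrix.smul_apply, Matrix.vecMulVec_apply, smul_eq_mul, one_div]
  ext i j
  cases i with
  | inl i0 =>
    cases j with
    | inl j0 =>
      rw [entry]
      simp only [x, Sum.elim_inl, one_mul]
      rw [Finset.sum_const, card_perm_fin, nsmul_eq_mul, mul_one,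
        inv_mul_cancel₀ hfac, Matrix.fromBlocks_apply₁₁]
      simp [Matrix.one_apply]
    | inr kl =>
      rw [entry]
      simp only [x, Sum.elim_inl, Sum.elim_inr, one_mul]
      rw [Finset.sum_congr rfl (fun a _ => z_eq_zeta c a kl),
        sum_zeta_eq_zero c (ne_of_lt kl.2), mul_zero, Matrix.fromBlocks_apply₁₂]
      simp
  | inr ij =>
    cases j with
    | inl j0 =>
      rw [entry]
      simp only [x, Sum.elim_inl, Sum.elim_inr, mul_one]
      rw [Finset.sum_congr rfl (fun a _ => z_eq_zeta c a ij),
        sum_zeta_eq_zero c (ne_of_lt ij.2), mul_zero, Matrix.fromBlocks_apply₂₁]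
      simp
    | inr kl =>
      rw [entry]
      simp only [x, Sum.elim_inr]
      rw [Matrix.fromBlocks_apply₂₂, Matrix.add_apply, Matrix.smul_apply,
        Matrix.smul_apply, Matrix.one_apply, smul_eq_mul, smul_eq_mul]
      have hij : ij.1.1 < ij.1.2 := ij.2
      have hkl : kl.1.1 < kl.1.2 := kl.2
      by_cases hik : ij.1.1 = kl.1.1
      · by_cases hjl : ij.1.2 = kl.1.2
        · -- diagonal
          have hekl : ij = kl := Subtype.ext (Prod.ext hik hjl)
          have hsum : ∀ a : Equiv.Perm (Fin m), z c a ij * z c a kl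
              = (zeta c a ij.1.1 ij.1.2)^2 := by
            intro a
            rw [← hekl, z_eq_zeta]; ring
          rw [Finset.sum_congr rfl (fun a _ => hsum a),
            sum_zeta_sq hm c (ne_of_lt hij), inv_mul_cancel_left₀ hfac]
          have h12 : ij.1.1 ≠ ij.1.2 := ne_of_lt hij
          have hV : V m ij kl = 0 := by
            rw [← hekl, V]
            simp [h12, h12.symm]
          rw [if_pos hekl, hV]
          ring
        · -- shared first index
          have hne : ij ≠ kl := fun h => hjl (congrArg (fun t => t.1.2) h)
          have d2 : ij.1.1 ≠ kl.1.2 := hik ▸ ne_of_lt hkl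
          have hsum : ∀ a : Equiv.Perm (Fin m), z c a ij * z c a kl
              = zeta c a ij.1.1 ij.1.2 * zeta c a ij.1.1 kl.1.2 := by
            intro a
            rw [z_eq_zeta, z_eq_zeta, ← hik]
          rw [Finset.sum_congr rfl (fun a _ => hsum a),
            sum_zeta_shared hm c (ne_of_lt hij) d2 hjl, inv_mul_cancel_left₀ hfac]
          rw [if_neg hne, V, if_pos (Or.inl ⟨hik, hjl⟩)]
          ring
      · by_cases hjl : ij.1.2 = kl.1.2
        · -- shared second index
          have hne : ij ≠ kl := fun h => hik (congrArg (fun t => t.1.1) h)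
          have d1 : ij.1.2 ≠ ij.1.1 := (ne_of_lt hij).symm
          have d2 : ij.1.2 ≠ kl.1.1 := hjl ▸ (ne_of_lt hkl).symm
          have hsum : ∀ a : Equiv.Perm (Fin m), z c a ij * z c a kl
              = zeta c a ij.1.2 ij.1.1 * zeta c a ij.1.2 kl.1.1 := by
            intro a
            rw [z_eq_zeta, z_eq_zeta, ← hjl, zeta_antisymm c a (ne_of_lt hij),
              zeta_antisymm c a (d2.symm :  kl.1.1 ≠ ij.1.2)]
            ring
          rw [Finset.sum_congr rfl (fun a _ => hsum a),
            sum_zeta_shared hm c d1 d2 hik, inv_mul_cancel_left₀ hfac]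
          rw [if_neg hne, V, if_pos (Or.inr ⟨hik, hjl⟩)]
          ring
        · by_cases hil : ij.1.1 = kl.1.2
          · -- i = l
            have hne : ij ≠ kl := fun h => hik (congrArg (fun t => t.1.1) h)
            have d2 : ij.1.1 ≠ kl.1.1 := hil ▸ (ne_of_lt hkl).symm
            have d3 : ij.1.2 ≠ kl.1.1 := by
              have hlt : kl.1.1 < ij.1.1 := by rw [hil]; exact hkl
              exact (ne_of_lt (hlt.trans hij)).symm
            have hsum : ∀ a : Equiv.Perm (Fin m), z c a ij * z c a kl
                = - (zeta c a ij.1.1 ij.1.2 * zeta c a ij.1.1 kl.1.1) := by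
              intro a
              rw [z_eq_zeta, z_eq_zeta, ← hil, zeta_antisymm c a (d2.symm : kl.1.1 ≠ ij.1.1)]
              ring
            rw [Finset.sum_congr rfl (fun a _ => hsum a), Finset.sum_neg_distrib,
              sum_zeta_shared hm c (ne_of_lt hij) d2 d3]
            rw [if_neg hne, V, if_neg (by push_neg; exact ⟨fun h => absurd h hik,
              fun _ => hjl⟩), if_pos (Or.inl hil)]
            field_simp
            ring
          · by_cases hjk : ij.1.2 = kl.1.1
            · -- j = k
              have hne : ij ≠ kl := fun h => hik (congrArg (fun t => t.1.1) h)
              have d1 : ij.1.2 ≠ ij.1.1 := (ne_of_lt hij).symm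
              have d2 : ij.1.2 ≠ kl.1.2 := hjk ▸ ne_of_lt hkl
              have d3 : ij.1.1 ≠ kl.1.2 := hil
              have hsum : ∀ a : Equiv.Perm (Fin m), z c a ij * z c a kl
                  = - (zeta c a ij.1.2 ij.1.1 * zeta c a ij.1.2 kl.1.2) := by
                intro a
                rw [z_eq_zeta, z_eq_zeta, ← hjk, zeta_antisymm c a (ne_of_lt hij)]
                ring
              rw [Finset.sum_congr rfl (fun a _ => hsum a), Finset.sum_neg_distrib,
                sum_zeta_shared hm c d1 d2 d3]
              rw [if_neg hne, V, if_neg (by push_neg; exact ⟨fun h => absurd h hik,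
                fun _ => hjl⟩), if_pos (Or.inr hjk)]
              field_simp
              ring
            · -- all distinct
              have hne : ij ≠ kl := fun h => hik (congrArg (fun t => t.1.1) h)
              have hsum : ∀ a : Equiv.Perm (Fin m), z c a ij * z c a kl
                  = zeta c a ij.1.1 ij.1.2 * zeta c a kl.1.1 kl.1.2 := by
                intro a
                rw [z_eq_zeta, z_eq_zeta]
              rw [Finset.sum_congr rfl (fun a _ => hsum a),
                sum_zeta_mul_disjoint c (ne_of_lt hij) (Ne.symm hik) (Ne.symm hjk)
                  (Ne.symm hil) (Ne.symm hjl), mul_zero]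
              rw [if_neg hne, V, if_neg (by push_neg; exact ⟨fun h => absurd h hik,
                fun _ => hjl⟩), if_neg (by push_neg; exact ⟨hil, hjk⟩)]
              ring

end OofA
end

section
/- For all integers i, j, k with 1 ≤ i < j < k ≤ m, Σ_{a∈A} z_{ij}(a) z_{ik}(a) = m!·b₁, Σ_{a∈A} z_{ik}(a) z_{jk}(a) = m!·b₁, and Σ_{a∈A} z_{ij}(a) z_{jk}(a) = −m!·b₁. (Lemma A.2(b).) -/
open Matrix Finset

namespace OofA

noncomputable def gg (c : ℕ → ℝ) (x y : ℕ) : ℝ :=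
  if x < y then c (Nat.dist x y) else -c (Nat.dist x y)

lemma gg_lt (c : ℕ → ℝ) {x y : ℕ} (h : x < y) : gg c x y = c (y - x) := by
  rw [gg, if_pos h, Nat.dist_eq_sub_of_le h.le]

lemma gg_gt (c : ℕ → ℝ) {x y : ℕ} (h : x < y) : gg c y x = -c (y - x) := by
  rw [gg, if_neg (by omega), Nat.dist_comm, Nat.dist_eq_sub_of_le h.le]

lemma gg_anti (c : ℕ → ℝ) {x y : ℕ} (h : x ≠ y) : gg c y x = -gg c x y := by
  rcases Nat.lt_or_ge x y with h' | h'
  · rw [gg_lt c h', gg_gt c h']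
  · have h2 : y < x := by omega
    rw [gg_lt c h2, gg_gt c h2, neg_neg]

lemma exists_perm_three {m : ℕ} (p q r p' q' r' : Fin m)
    (h1 : p ≠ q) (h2 : p ≠ r) (h3 : q ≠ r)
    (h1' : p' ≠ q') (h2' : p' ≠ r') (h3' : q' ≠ r') :
    ∃ τ : Equiv.Perm (Fin m), τ p = p' ∧ τ q = q' ∧ τ r = r' := by
  classical
  set σ1 := Equiv.swap p p' with hσ1
  have hq1p' : σ1 q ≠ p' := by
    intro h
    exact h1 (σ1.injective (by simpa [hσ1] using h.symm))
  have hr1p' : σ1 r ≠ p' := by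
    intro h
    exact h2 (σ1.injective (by simpa [hσ1] using h.symm))
  have hq1r1 : σ1 q ≠ σ1 r := fun h => h3 (σ1.injective h)
  set σ2 := Equiv.swap (σ1 q) q' with hσ2
  have hσ2p' : σ2 p' = p' := Equiv.swap_apply_of_ne_of_ne (Ne.symm hq1p') h1'
  have hr2p' : σ2 (σ1 r) ≠ p' := by
    intro h
    exact hr1p' (σ2.injective (by rw [h, hσ2p']))
  have hr2q' : σ2 (σ1 r) ≠ q' := by
    intro h
    exact hq1r1 (σ2.injective (by rw [h]; simp [hσ2])).symm
  refine ⟨(σ1.trans σ2).trans (Equiv.swap (σ2 (σ1 r)) r'), ?_, ?_, ?_⟩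
  · simp only [Equiv.trans_apply]
    rw [show σ1 p = p' from Equiv.swap_apply_left p p', hσ2p',
      Equiv.swap_apply_of_ne_of_ne (Ne.symm hr2p') h2']
  · simp only [Equiv.trans_apply]
    rw [show σ2 (σ1 q) = q' from Equiv.swap_apply_left _ q',
      Equiv.swap_apply_of_ne_of_ne (Ne.symm hr2q') h3']
  · simp only [Equiv.trans_apply]
    exact Equiv.swap_apply_left _ r'


def DD (m : ℕ) : Finset (ℕ × ℕ × ℕ) :=
  ((range m) ×ˢ (range m) ×ˢ (range m)).filter
    fun t => t.1 ≠ t.2.1 ∧ t.1 ≠ t.2.2 ∧ t.2.1 ≠ t.2.2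

lemma mem_DD {m : ℕ} {t : ℕ × ℕ × ℕ} : t ∈ DD m ↔
    t.1 < m ∧ t.2.1 < m ∧ t.2.2 < m ∧ t.1 ≠ t.2.1 ∧ t.1 ≠ t.2.2 ∧ t.2.1 ≠ t.2.2 := by
  simp [DD, mem_filter, mem_product, and_assoc]

lemma card_DD {m : ℕ} (hm : 3 ≤ m) : (DD m).card = m * (m - 1) * (m - 2) := by
  classical
  rw [DD, card_filter, sum_product]
  have step1 : ∀ x ∈ range m,
      (∑ p ∈ range m ×ˢ range m, if x ≠ p.1 ∧ x ≠ p.2 ∧ p.1 ≠ p.2 then 1 else 0)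
        = (m - 1) * (m - 2) := by
    intro x hx
    rw [sum_product]
    have inner : ∀ y ∈ range m,
        (∑ z ∈ range m, if x ≠ y ∧ x ≠ z ∧ y ≠ z then 1 else 0)
          = if x ≠ y then m - 2 else 0 := by
      intro y hy
      have hx' := mem_range.1 hx
      have hy' := mem_range.1 hy
      by_cases hxy : x = y
      · simp [hxy]
      · rw [if_pos hxy]
        have : ∀ z, (x ≠ y ∧ x ≠ z ∧ y ≠ z) = (x ≠ z ∧ y ≠ z) := by
          intro z; simp [hxy]
        simp only [this]
        rw [← card_filter]
        have hset : ((range m).filter fun z => x ≠ z ∧ y ≠ z)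
            = ((range m).erase x).erase y := by
          ext z; simp [mem_erase]; omega
        rw [hset, card_erase_of_mem (by simp [mem_erase]; omega),
          card_erase_of_mem (by simp; omega), card_range]
        omega
    rw [sum_congr rfl inner, ← sum_filter]
    rw [sum_const, smul_eq_mul]
    have : ((range m).filter fun y => x ≠ y) = (range m).erase x := by
      ext y; simp [mem_erase]; omega
    rw [this, card_erase_of_mem (by simpa using hx), card_range]
  rw [sum_congr rfl step1, sum_const, smul_eq_mul, card_range, mul_assoc]


lemma key {m : ℕ} (hm : 3 ≤ m) (f : ℕ → ℕ → ℕ → ℝ) (u v w : Fin m)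
    (huv : u ≠ v) (huw : u ≠ w) (hvw : v ≠ w) :
    ((m * (m - 1) * (m - 2) : ℕ) : ℝ) *
      ∑ a : Equiv.Perm (Fin m), f (a.symm u) (a.symm v) (a.symm w)
    = (Nat.factorial m : ℝ) * ∑ t ∈ DD m, f t.1 t.2.1 t.2.2 := by
  classical
  set φ : Equiv.Perm (Fin m) → ℕ × ℕ × ℕ :=
    fun a => ((a.symm u : ℕ), (a.symm v : ℕ), (a.symm w : ℕ)) with hφ
  have hmaps : ∀ a : Equiv.Perm (Fin m), a ∈ (univ : Finset (Equiv.Perm (Fin m))) →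
      φ a ∈ DD m := by
    intro a _
    refine mem_DD.2 ⟨(a.symm u).isLt, (a.symm v).isLt, (a.symm w).isLt, ?_, ?_, ?_⟩
    · exact fun h => huv (a.symm.injective (Fin.val_injective h))
    · exact fun h => huw (a.symm.injective (Fin.val_injective h))
    · exact fun h => hvw (a.symm.injective (Fin.val_injective h))
  -- fibers all have the same cardinality
  have hfib : ∀ t ∈ DD m, ∀ t' ∈ DD m,
      (univ.filter fun a => φ a = t).card = (univ.filter fun a => φ a = t').card := by
    intro t ht t' ht'
    rw [mem_DD] at ht ht'
    obtain ⟨hx, hy, hz, hd1, hd2, hd3⟩ := ht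
    obtain ⟨hx', hy', hz', hd1', hd2', hd3'⟩ := ht'
    set X : Fin m := ⟨t.1, hx⟩
    set Y : Fin m := ⟨t.2.1, hy⟩
    set Z : Fin m := ⟨t.2.2, hz⟩
    set X' : Fin m := ⟨t'.1, hx'⟩
    set Y' : Fin m := ⟨t'.2.1, hy'⟩
    set Z' : Fin m := ⟨t'.2.2, hz'⟩
    obtain ⟨τ, hτ1, hτ2, hτ3⟩ := exists_perm_three X' Y' Z' X Y Z
      (Fin.ne_of_val_ne hd1') (Fin.ne_of_val_ne hd2') (Fin.ne_of_val_ne hd3')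
      (Fin.ne_of_val_ne hd1) (Fin.ne_of_val_ne hd2) (Fin.ne_of_val_ne hd3)
    have hchar : ∀ (a : Equiv.Perm (Fin m)) (s : ℕ × ℕ × ℕ) (h1 : s.1 < m)
        (h2 : s.2.1 < m) (h3 : s.2.2 < m),
        φ a = s ↔ a.symm u = ⟨s.1, h1⟩ ∧ a.symm v = ⟨s.2.1, h2⟩ ∧ a.symm w = ⟨s.2.2, h3⟩ := by
      intro a s h1 h2 h3
      rw [Prod.ext_iff, Prod.ext_iff]
      simp [hφ, Fin.ext_iff]
    apply Finset.card_nbij' (i := fun a => τ.trans a) (j := fun a => τ.symm.trans a)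
    · intro a ha
      simp only [mem_coe, mem_filter, mem_univ, true_and] at ha ⊢
      rw [hchar a t hx hy hz] at ha
      rw [hchar _ t' hx' hy' hz']
      obtain ⟨e1, e2, e3⟩ := ha
      refine ⟨?_, ?_, ?_⟩
      · simp only [Equiv.symm_trans_apply, e1]; rw [Equiv.symm_apply_eq]; exact hτ1.symm
      · simp only [Equiv.symm_trans_apply, e2]; rw [Equiv.symm_apply_eq]; exact hτ2.symm
      · simp only [Equiv.symm_trans_apply, e3]; rw [Equiv.symm_apply_eq]; exact hτ3.symm
    · intro a ha
      simp only [mem_coe, mem_filter, mem_univ, true_and] at ha ⊢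
      rw [hchar a t' hx' hy' hz'] at ha
      rw [hchar _ t hx hy hz]
      obtain ⟨e1, e2, e3⟩ := ha
      refine ⟨?_, ?_, ?_⟩
      · simp only [Equiv.symm_trans_apply, Equiv.symm_symm, e1]; exact hτ1
      · simp only [Equiv.symm_trans_apply, Equiv.symm_symm, e2]; exact hτ2
      · simp only [Equiv.symm_trans_apply, Equiv.symm_symm, e3]; exact hτ3
    · intro a ha; ext p; simp
    · intro a ha; ext p; simp
  have ht0 : ((0 : ℕ), (1 : ℕ), (2 : ℕ)) ∈ DD m := by rw [mem_DD]; norm_num; omega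
  set N : ℕ := (univ.filter fun a => φ a = ((0 : ℕ), 1, 2)).card with hN
  have hNfac : m * (m - 1) * (m - 2) * N = Nat.factorial m := by
    have h1 : (univ : Finset (Equiv.Perm (Fin m))).card
        = ∑ t ∈ DD m, (univ.filter fun a => φ a = t).card :=
      Finset.card_eq_sum_card_fiberwise hmaps
    rw [card_univ, Fintype.card_perm, Fintype.card_fin] at h1
    rw [h1, sum_congr rfl fun t ht => hfib t ht _ ht0, sum_const, smul_eq_mul, card_DD hm]
  have hsum : (∑ a : Equiv.Perm (Fin m), f (a.symm u) (a.symm v) (a.symm w))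
      = (N : ℝ) * ∑ t ∈ DD m, f t.1 t.2.1 t.2.2 := by
    rw [← Finset.sum_fiberwise_of_maps_to' hmaps (fun t => f t.1 t.2.1 t.2.2), mul_sum]
    refine sum_congr rfl fun t ht => ?_
    rw [sum_const, nsmul_eq_mul, hfib t ht _ ht0]
  rw [hsum, ← mul_assoc, ← Nat.cast_mul, hNfac]


noncomputable def SS (m : ℕ) (F : ℕ → ℕ → ℝ) : ℝ :=
  ∑ h1 ∈ range m, ∑ h2 ∈ range m,
    if 1 ≤ h1 ∧ 1 ≤ h2 ∧ h1 + h2 ≤ m - 1 then ((m - h1 - h2 : ℕ) : ℝ) * F h1 h2 else 0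

lemma SS_congr {m : ℕ} {F G : ℕ → ℕ → ℝ} (h : ∀ a b, F a b = G a b) : SS m F = SS m G := by
  unfold SS
  exact sum_congr rfl fun a _ => sum_congr rfl fun b _ => by rw [h]

lemma SS_neg (m : ℕ) (F : ℕ → ℕ → ℝ) : SS m (fun a b => -F a b) = -SS m F := by
  unfold SS
  rw [← sum_neg_distrib]
  refine sum_congr rfl fun a _ => ?_
  rw [← sum_neg_distrib]
  refine sum_congr rfl fun b _ => ?_
  split_ifs <;> ring

lemma SS_comb (m : ℕ) (F G : ℕ → ℕ → ℝ) :
    SS m (fun a b => 2 * F a b - G a b) = 2 * SS m F - SS m G := by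
  unfold SS
  rw [mul_sum, ← sum_sub_distrib]
  refine sum_congr rfl fun a _ => ?_
  rw [mul_sum, ← sum_sub_distrib]
  refine sum_congr rfl fun b _ => ?_
  split_ifs <;> ring

lemma SS_swap (m : ℕ) (F : ℕ → ℕ → ℝ) : SS m F = SS m (fun a b => F b a) := by
  unfold SS
  rw [sum_comm]
  refine sum_congr rfl fun a _ => sum_congr rfl fun b _ => ?_
  rw [show m - b - a = m - a - b from by omega]
  exact if_congr ⟨fun h => ⟨h.2.1, h.1, by omega⟩, fun h => ⟨h.2.1, h.1, by omega⟩⟩ rfl rfl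

lemma sliceSum (m : ℕ) (F : ℕ → ℕ → ℝ) :
    ∑ t ∈ ((range m ×ˢ range m ×ˢ range m).filter fun t => t.1 < t.2.1 ∧ t.2.1 < t.2.2),
        F (t.2.1 - t.1) (t.2.2 - t.2.1)
      = SS m F := by
  unfold SS
  have step : ∑ t ∈ ((range m ×ˢ range m ×ˢ range m).filter
        fun t => t.1 < t.2.1 ∧ t.2.1 < t.2.2), F (t.2.1 - t.1) (t.2.2 - t.2.1)
      = ∑ s ∈ ((range m ×ˢ range m ×ˢ range m).filter
        fun s => 1 ≤ s.1 ∧ 1 ≤ s.2.1 ∧ s.1 + s.2.1 + s.2.2 < m), F s.1 s.2.1 := by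
    refine sum_nbij' (fun t => (t.2.1 - t.1, t.2.2 - t.2.1, t.1))
      (fun s => (s.2.2, s.2.2 + s.1, s.2.2 + s.1 + s.2.1)) ?_ ?_ ?_ ?_ ?_
    · intro t ht; simp only [mem_filter, mem_product, mem_range] at ht ⊢; omega
    · intro s hs; simp only [mem_filter, mem_product, mem_range] at hs ⊢; omega
    · intro t ht
      obtain ⟨x, y, z⟩ := t
      simp only [mem_filter, mem_product, mem_range] at ht
      simp only [Prod.mk.injEq, true_and, and_true, eq_self_iff_true]
      omega
    · intro s hs
      obtain ⟨h1, h2, x⟩ := s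
      simp only [mem_filter, mem_product, mem_range] at hs
      simp only [Prod.mk.injEq, true_and, and_true, eq_self_iff_true]
      omega
    · intro t _; rfl
  rw [step, sum_filter, sum_product]
  refine sum_congr rfl fun h1 hh1 => ?_
  rw [sum_product]
  refine sum_congr rfl fun h2 hh2 => ?_
  by_cases hc : 1 ≤ h1 ∧ 1 ≤ h2
  · have e : ∀ x ∈ range m,
        (if 1 ≤ h1 ∧ 1 ≤ h2 ∧ h1 + h2 + x < m then F h1 h2 else 0)
          = (if h1 + h2 + x < m then F h1 h2 else 0) := fun x _ => by simp [hc.1, hc.2]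
    rw [sum_congr rfl e, ← sum_filter]
    have e2 : (range m).filter (fun x => h1 + h2 + x < m) = range (m - h1 - h2) := by
      ext x; simp only [mem_filter, mem_range]; omega
    rw [e2, sum_const, card_range, nsmul_eq_mul]
    by_cases hd : h1 + h2 ≤ m - 1
    · rw [if_pos ⟨hc.1, hc.2, hd⟩]
    · rw [if_neg (fun hcon => hd hcon.2.2)]
      rw [show m - h1 - h2 = 0 from by omega]
      simp
  · rw [if_neg (fun hcon => hc ⟨hcon.1, hcon.2.1⟩)]
    exact sum_eq_zero fun x _ => if_neg (fun hcon => hc ⟨hcon.1, hcon.2.1⟩)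


lemma case1 (m : ℕ) (c : ℕ → ℝ) :
    ∑ t ∈ ((range m ×ˢ range m ×ˢ range m).filter fun t => t.1 < t.2.1 ∧ t.2.1 < t.2.2),
        gg c t.1 t.2.1 * gg c t.1 t.2.2
      = SS m (fun a b => c a * c (a + b)) := by
  rw [← sliceSum m (fun a b => c a * c (a + b))]
  refine sum_congr rfl fun t ht => ?_
  simp only [mem_filter, mem_product, mem_range] at ht
  obtain ⟨-, hab, hbc⟩ := ht
  show gg c t.1 t.2.1 * gg c t.1 t.2.2
      = c (t.2.1 - t.1) * c ((t.2.1 - t.1) + (t.2.2 - t.2.1))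
  rw [gg_lt c hab, gg_lt c (hab.trans hbc),
    show t.2.2 - t.1 = (t.2.1 - t.1) + (t.2.2 - t.2.1) from by omega]

lemma case2 (m : ℕ) (c : ℕ → ℝ) :
    ∑ t ∈ ((range m ×ˢ range m ×ˢ range m).filter fun t => t.1 < t.2.2 ∧ t.2.2 < t.2.1),
        gg c t.1 t.2.1 * gg c t.1 t.2.2
      = SS m (fun a b => c (a + b) * c a) := by
  rw [← sliceSum m (fun a b => c (a + b) * c a)]
  refine sum_nbij' (fun t => (t.1, t.2.2, t.2.1)) (fun s => (s.1, s.2.2, s.2.1))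
    ?_ ?_ (fun t _ => rfl) (fun s _ => rfl) ?_
  · intro t ht; simp only [mem_filter, mem_product, mem_range] at ht ⊢; omega
  · intro s hs; simp only [mem_filter, mem_product, mem_range] at hs ⊢; omega
  · intro t ht
    simp only [mem_filter, mem_product, mem_range] at ht
    obtain ⟨-, h1, h2⟩ := ht
    show gg c t.1 t.2.1 * gg c t.1 t.2.2
        = c ((t.2.2 - t.1) + (t.2.1 - t.2.2)) * c (t.2.2 - t.1)
    rw [gg_lt c (h1.trans h2), gg_lt c h1,
      show t.2.1 - t.1 = (t.2.2 - t.1) + (t.2.1 - t.2.2) from by omega]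

lemma case3 (m : ℕ) (c : ℕ → ℝ) :
    ∑ t ∈ ((range m ×ˢ range m ×ˢ range m).filter fun t => t.2.1 < t.1 ∧ t.1 < t.2.2),
        gg c t.1 t.2.1 * gg c t.1 t.2.2
      = SS m (fun a b => -(c a * c b)) := by
  rw [← sliceSum m (fun a b => -(c a * c b))]
  refine sum_nbij' (fun t => (t.2.1, t.1, t.2.2)) (fun s => (s.2.1, s.1, s.2.2))
    ?_ ?_ (fun t _ => rfl) (fun s _ => rfl) ?_
  · intro t ht; simp only [mem_filter, mem_product, mem_range] at ht ⊢; omega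
  · intro s hs; simp only [mem_filter, mem_product, mem_range] at hs ⊢; omega
  · intro t ht
    simp only [mem_filter, mem_product, mem_range] at ht
    obtain ⟨-, h1, h2⟩ := ht
    show gg c t.1 t.2.1 * gg c t.1 t.2.2 = -(c (t.1 - t.2.1) * c (t.2.2 - t.1))
    rw [gg_gt c h1, gg_lt c h2]; ring

lemma case4 (m : ℕ) (c : ℕ → ℝ) :
    ∑ t ∈ ((range m ×ˢ range m ×ˢ range m).filter fun t => t.2.2 < t.1 ∧ t.1 < t.2.1),
        gg c t.1 t.2.1 * gg c t.1 t.2.2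
      = SS m (fun a b => -(c b * c a)) := by
  rw [← sliceSum m (fun a b => -(c b * c a))]
  refine sum_nbij' (fun t => (t.2.2, t.1, t.2.1)) (fun s => (s.2.1, s.2.2, s.1))
    ?_ ?_ (fun t _ => rfl) (fun s _ => rfl) ?_
  · intro t ht; simp only [mem_filter, mem_product, mem_range] at ht ⊢; omega
  · intro s hs; simp only [mem_filter, mem_product, mem_range] at hs ⊢; omega
  · intro t ht
    simp only [mem_filter, mem_product, mem_range] at ht
    obtain ⟨-, h1, h2⟩ := ht
    show gg c t.1 t.2.1 * gg c t.1 t.2.2 = -(c (t.2.1 - t.1) * c (t.1 - t.2.2))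
    rw [gg_lt c h2, gg_gt c h1]; ring

lemma case5 (m : ℕ) (c : ℕ → ℝ) :
    ∑ t ∈ ((range m ×ˢ range m ×ˢ range m).filter fun t => t.2.1 < t.2.2 ∧ t.2.2 < t.1),
        gg c t.1 t.2.1 * gg c t.1 t.2.2
      = SS m (fun a b => c (a + b) * c b) := by
  rw [← sliceSum m (fun a b => c (a + b) * c b)]
  refine sum_nbij' (fun t => (t.2.1, t.2.2, t.1)) (fun s => (s.2.2, s.1, s.2.1))
    ?_ ?_ (fun t _ => rfl) (fun s _ => rfl) ?_
  · intro t ht; simp only [mem_filter, mem_product, mem_range] at ht ⊢; omega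
  · intro s hs; simp only [mem_filter, mem_product, mem_range] at hs ⊢; omega
  · intro t ht
    simp only [mem_filter, mem_product, mem_range] at ht
    obtain ⟨-, h1, h2⟩ := ht
    show gg c t.1 t.2.1 * gg c t.1 t.2.2
        = c ((t.2.2 - t.2.1) + (t.1 - t.2.2)) * c (t.1 - t.2.2)
    rw [gg_gt c (h1.trans h2), gg_gt c h2,
      show t.1 - t.2.1 = (t.2.2 - t.2.1) + (t.1 - t.2.2) from by omega]
    ring

lemma case6 (m : ℕ) (c : ℕ → ℝ) :
    ∑ t ∈ ((range m ×ˢ range m ×ˢ range m).filter fun t => t.2.2 < t.2.1 ∧ t.2.1 < t.1),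
        gg c t.1 t.2.1 * gg c t.1 t.2.2
      = SS m (fun a b => c b * c (a + b)) := by
  rw [← sliceSum m (fun a b => c b * c (a + b))]
  refine sum_nbij' (fun t => (t.2.2, t.2.1, t.1)) (fun s => (s.2.2, s.2.1, s.1))
    ?_ ?_ (fun t _ => rfl) (fun s _ => rfl) ?_
  · intro t ht; simp only [mem_filter, mem_product, mem_range] at ht ⊢; omega
  · intro s hs; simp only [mem_filter, mem_product, mem_range] at hs ⊢; omega
  · intro t ht
    simp only [mem_filter, mem_product, mem_range] at ht
    obtain ⟨-, h1, h2⟩ := ht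
    show gg c t.1 t.2.1 * gg c t.1 t.2.2
        = c (t.1 - t.2.1) * c ((t.2.1 - t.2.2) + (t.1 - t.2.1))
    rw [gg_gt c h2, gg_gt c (h1.trans h2),
      show t.1 - t.2.2 = (t.2.1 - t.2.2) + (t.1 - t.2.1) from by omega]
    ring

lemma core {m : ℕ} (c : ℕ → ℝ) :
    ∑ t ∈ DD m, gg c t.1 t.2.1 * gg c t.1 t.2.2
      = 4 * SS m (fun a b => c a * c (a + b)) - 2 * SS m (fun a b => c a * c b) := by
  classical
  have key6 : ∀ t : ℕ × ℕ × ℕ,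
      (if t.1 ≠ t.2.1 ∧ t.1 ≠ t.2.2 ∧ t.2.1 ≠ t.2.2 then gg c t.1 t.2.1 * gg c t.1 t.2.2 else 0)
        = (if t.1 < t.2.1 ∧ t.2.1 < t.2.2 then gg c t.1 t.2.1 * gg c t.1 t.2.2 else 0)
        + (if t.1 < t.2.2 ∧ t.2.2 < t.2.1 then gg c t.1 t.2.1 * gg c t.1 t.2.2 else 0)
        + (if t.2.1 < t.1 ∧ t.1 < t.2.2 then gg c t.1 t.2.1 * gg c t.1 t.2.2 else 0)
        + (if t.2.2 < t.1 ∧ t.1 < t.2.1 then gg c t.1 t.2.1 * gg c t.1 t.2.2 else 0)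
        + (if t.2.1 < t.2.2 ∧ t.2.2 < t.1 then gg c t.1 t.2.1 * gg c t.1 t.2.2 else 0)
        + (if t.2.2 < t.2.1 ∧ t.2.1 < t.1 then gg c t.1 t.2.1 * gg c t.1 t.2.2 else 0) := by
    intro t
    split_ifs <;> first | ring1 | (exfalso; omega)
  unfold DD
  rw [sum_filter, sum_congr rfl fun t _ => key6 t,
    sum_add_distrib, sum_add_distrib, sum_add_distrib, sum_add_distrib, sum_add_distrib,
    ← sum_filter, ← sum_filter, ← sum_filter, ← sum_filter, ← sum_filter, ← sum_filter,
    case1, case2, case3, case4, case5, case6]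
  have hF2 : SS m (fun a b => c (a + b) * c a) = SS m (fun a b => c a * c (a + b)) :=
    SS_congr fun a b => mul_comm _ _
  have hF3 : SS m (fun a b => -(c a * c b)) = -SS m (fun a b => c a * c b) :=
    SS_neg m _
  have hF4 : SS m (fun a b => -(c b * c a)) = -SS m (fun a b => c a * c b) := by
    rw [show (fun a b => -(c b * c a)) = (fun a b : ℕ => -(c a * c b)) from by
      funext a b; ring, SS_neg]
  have hF5 : SS m (fun a b => c (a + b) * c b) = SS m (fun a b => c a * c (a + b)) := by
    rw [SS_swap m (fun a b => c (a + b) * c b)]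
    exact SS_congr fun a b => by rw [Nat.add_comm b a]; ring
  have hF6 : SS m (fun a b => c b * c (a + b)) = SS m (fun a b => c a * c (a + b)) := by
    rw [SS_swap m (fun a b => c b * c (a + b))]
    exact SS_congr fun a b => by rw [Nat.add_comm b a]
  rw [hF2, hF3, hF4, hF5, hF6]
  ring

lemma S2_eq {m : ℕ} (c : ℕ → ℝ) :
    ∑ t ∈ DD m, gg c t.1 t.2.2 * gg c t.2.1 t.2.2
      = ∑ t ∈ DD m, gg c t.1 t.2.1 * gg c t.1 t.2.2 := by
  refine sum_nbij' (fun t => (t.2.2, t.2.1, t.1)) (fun t => (t.2.2, t.2.1, t.1))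
    ?_ ?_ (fun t _ => rfl) (fun s _ => rfl) ?_
  · intro t ht; obtain ⟨x, y, z⟩ := t; simp only [mem_DD] at ht ⊢; omega
  · intro t ht; obtain ⟨x, y, z⟩ := t; simp only [mem_DD] at ht ⊢; omega
  · intro t ht
    rw [mem_DD] at ht
    show gg c t.1 t.2.2 * gg c t.2.1 t.2.2 = gg c t.2.2 t.2.1 * gg c t.2.2 t.1
    rw [gg_anti c ht.2.2.2.2.2, gg_anti c ht.2.2.2.2.1]
    ring

lemma S3_eq {m : ℕ} (c : ℕ → ℝ) :
    ∑ t ∈ DD m, gg c t.1 t.2.1 * gg c t.2.1 t.2.2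
      = -∑ t ∈ DD m, gg c t.1 t.2.1 * gg c t.1 t.2.2 := by
  rw [← sum_neg_distrib]
  refine sum_nbij' (fun t => (t.2.1, t.1, t.2.2)) (fun t => (t.2.1, t.1, t.2.2))
    ?_ ?_ (fun t _ => rfl) (fun s _ => rfl) ?_
  · intro t ht; obtain ⟨x, y, z⟩ := t; simp only [mem_DD] at ht ⊢; omega
  · intro t ht; obtain ⟨x, y, z⟩ := t; simp only [mem_DD] at ht ⊢; omega
  · intro t ht
    rw [mem_DD] at ht
    show gg c t.1 t.2.1 * gg c t.2.1 t.2.2 = -(gg c t.2.1 t.1 * gg c t.2.1 t.2.2)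
    rw [gg_anti c ht.2.2.2.1]
    ring

lemma bridge {m : ℕ} (hm : 3 ≤ m) (c : ℕ → ℝ) :
    ∑ h1 ∈ Icc 1 (m - 1), ∑ h2 ∈ Icc 1 (m - 1 - h1),
        ((m : ℝ) - h1 - h2) * c h1 * (2 * c (h1 + h2) - c h2)
      = 2 * SS m (fun a b => c a * c (a + b)) - SS m (fun a b => c a * c b) := by
  rw [← SS_comb m (fun a b => c a * c (a + b)) (fun a b => c a * c b)]
  unfold SS
  have e1 : Icc 1 (m - 1) = (range m).filter (fun h => 1 ≤ h) := by
    ext h; simp only [mem_Icc, mem_filter, mem_range]; omega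
  rw [e1, sum_filter]
  refine sum_congr rfl fun h1 hh1 => ?_
  rw [mem_range] at hh1
  by_cases h1c : 1 ≤ h1
  · rw [if_pos h1c]
    have e2 : Icc 1 (m - 1 - h1) = (range m).filter (fun h2 => 1 ≤ h2 ∧ h1 + h2 ≤ m - 1) := by
      ext h2; simp only [mem_Icc, mem_filter, mem_range]; omega
    rw [e2, sum_filter]
    refine sum_congr rfl fun h2 _ => ?_
    by_cases h2c : 1 ≤ h2 ∧ h1 + h2 ≤ m - 1
    · rw [if_pos h2c, if_pos ⟨h1c, h2c.1, h2c.2⟩]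
      have hle : h1 + h2 ≤ m := by omega
      have hcast : ((m - h1 - h2 : ℕ) : ℝ) = (m : ℝ) - h1 - h2 := by
        rw [Nat.sub_sub, Nat.cast_sub hle]
        push_cast
        ring
      rw [hcast]
      show ((m : ℝ) - h1 - h2) * c h1 * (2 * c (h1 + h2) - c h2)
          = ((m : ℝ) - h1 - h2) * (2 * (c h1 * c (h1 + h2)) - c h1 * c h2)
      ring
    · rw [if_neg h2c, if_neg (fun h => h2c ⟨h.2.1, h.2.2⟩)]
  · rw [if_neg h1c]
    symm
    exact sum_eq_zero fun h2 _ => if_neg (fun h => h1c h.1)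


/-- Lemma A.2(b): for `i < j < k`, `Σ_a z_{ij}(a) z_{ik}(a) = m! b₁`,
`Σ_a z_{ik}(a) z_{jk}(a) = m! b₁` and `Σ_a z_{ij}(a) z_{jk}(a) = −m! b₁`. -/
theorem statement7 {m : ℕ} (hm : 3 ≤ m) (c : ℕ → ℝ) (hc1 : c 1 = 1)
    (hmono : ∀ h : ℕ, 1 ≤ h → h + 1 ≤ m - 1 → c (h + 1) ≤ c h)
    (hlast : 0 ≤ c (m - 1)) (i j k : Fin m) (hij : i < j) (hjk : j < k) :
    (∑ a : Equiv.Perm (Fin m), z c a ⟨(i, j), hij⟩ * z c a ⟨(i, k), hij.trans hjk⟩) =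
        (Nat.factorial m : ℝ) * b1 m c ∧
      (∑ a : Equiv.Perm (Fin m), z c a ⟨(i, k), hij.trans hjk⟩ * z c a ⟨(j, k), hjk⟩) =
        (Nat.factorial m : ℝ) * b1 m c ∧
      (∑ a : Equiv.Perm (Fin m), z c a ⟨(i, j), hij⟩ * z c a ⟨(j, k), hjk⟩) =
        -((Nat.factorial m : ℝ) * b1 m c) := by
  have hij' : i ≠ j := ne_of_lt hij
  have hik' : i ≠ k := ne_of_lt (hij.trans hjk)
  have hjk' : j ≠ k := ne_of_lt hjk
  have hKr : ((m * (m - 1) * (m - 2) : ℕ) : ℝ) = (m : ℝ) * ((m : ℝ) - 1) * ((m : ℝ) - 2) := by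
    rw [Nat.cast_mul, Nat.cast_mul, Nat.cast_sub (by omega), Nat.cast_sub (by omega)]
    norm_num
  have hm3 : (3 : ℝ) ≤ (m : ℝ) := by exact_mod_cast hm
  have hK0 : (m : ℝ) * ((m : ℝ) - 1) * ((m : ℝ) - 2) ≠ 0 :=
    ne_of_gt (mul_pos (mul_pos (by linarith) (by linarith)) (by linarith))
  have hKb1 : (m : ℝ) * ((m : ℝ) - 1) * ((m : ℝ) - 2) * b1 m c
      = 2 * ∑ h1 ∈ Icc 1 (m - 1), ∑ h2 ∈ Icc 1 (m - 1 - h1),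
          ((m : ℝ) - h1 - h2) * c h1 * (2 * c (h1 + h2) - c h2) := by
    rw [b1]
    field_simp
    exact mul_div_cancel_left₀ _ (mul_ne_zero (ne_of_gt (by linarith)) (ne_of_gt (by linarith)))
  refine ⟨?_, ?_, ?_⟩
  · show (∑ a : Equiv.Perm (Fin m),
        gg c ((a.symm i : ℕ)) ((a.symm j : ℕ)) * gg c ((a.symm i : ℕ)) ((a.symm k : ℕ)))
      = (Nat.factorial m : ℝ) * b1 m c
    refine mul_left_cancel₀ hK0 ?_
    have k1 := key hm (fun x y z => gg c x y * gg c x z) i j k hij' hik' hjk'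
    calc (m : ℝ) * ((m : ℝ) - 1) * ((m : ℝ) - 2) *
          ∑ a : Equiv.Perm (Fin m),
            gg c ((a.symm i : ℕ)) ((a.symm j : ℕ)) * gg c ((a.symm i : ℕ)) ((a.symm k : ℕ))
        = ((m * (m - 1) * (m - 2) : ℕ) : ℝ) *
          ∑ a : Equiv.Perm (Fin m),
            gg c ((a.symm i : ℕ)) ((a.symm j : ℕ)) * gg c ((a.symm i : ℕ)) ((a.symm k : ℕ)) := by
          rw [hKr]
      _ = (Nat.factorial m : ℝ) * ∑ t ∈ DD m, gg c t.1 t.2.1 * gg c t.1 t.2.2 := k1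
      _ = (Nat.factorial m : ℝ) *
            (4 * SS m (fun a b => c a * c (a + b)) - 2 * SS m (fun a b => c a * c b)) := by
          rw [core c]
      _ = (Nat.factorial m : ℝ) * ((m : ℝ) * ((m : ℝ) - 1) * ((m : ℝ) - 2) * b1 m c) := by
          rw [hKb1, bridge hm c]; ring
      _ = (m : ℝ) * ((m : ℝ) - 1) * ((m : ℝ) - 2) * ((Nat.factorial m : ℝ) * b1 m c) := by
          ring
  · show (∑ a : Equiv.Perm (Fin m),
        gg c ((a.symm i : ℕ)) ((a.symm k : ℕ)) * gg c ((a.symm j : ℕ)) ((a.symm k : ℕ)))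
      = (Nat.factorial m : ℝ) * b1 m c
    refine mul_left_cancel₀ hK0 ?_
    have k2 := key hm (fun x y z => gg c x z * gg c y z) i j k hij' hik' hjk'
    calc (m : ℝ) * ((m : ℝ) - 1) * ((m : ℝ) - 2) *
          ∑ a : Equiv.Perm (Fin m),
            gg c ((a.symm i : ℕ)) ((a.symm k : ℕ)) * gg c ((a.symm j : ℕ)) ((a.symm k : ℕ))
        = ((m * (m - 1) * (m - 2) : ℕ) : ℝ) *
          ∑ a : Equiv.Perm (Fin m),
            gg c ((a.symm i : ℕ)) ((a.symm k : ℕ)) * gg c ((a.symm j : ℕ)) ((a.symm k : ℕ)) := by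
          rw [hKr]
      _ = (Nat.factorial m : ℝ) * ∑ t ∈ DD m, gg c t.1 t.2.2 * gg c t.2.1 t.2.2 := k2
      _ = (Nat.factorial m : ℝ) * ∑ t ∈ DD m, gg c t.1 t.2.1 * gg c t.1 t.2.2 := by
          rw [S2_eq c]
      _ = (Nat.factorial m : ℝ) *
            (4 * SS m (fun a b => c a * c (a + b)) - 2 * SS m (fun a b => c a * c b)) := by
          rw [core c]
      _ = (Nat.factorial m : ℝ) * ((m : ℝ) * ((m : ℝ) - 1) * ((m : ℝ) - 2) * b1 m c) := by
          rw [hKb1, bridge hm c]; ring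
      _ = (m : ℝ) * ((m : ℝ) - 1) * ((m : ℝ) - 2) * ((Nat.factorial m : ℝ) * b1 m c) := by
          ring
  · show (∑ a : Equiv.Perm (Fin m),
        gg c ((a.symm i : ℕ)) ((a.symm j : ℕ)) * gg c ((a.symm j : ℕ)) ((a.symm k : ℕ)))
      = -((Nat.factorial m : ℝ) * b1 m c)
    refine mul_left_cancel₀ hK0 ?_
    have k3 := key hm (fun x y z => gg c x y * gg c y z) i j k hij' hik' hjk'
    calc (m : ℝ) * ((m : ℝ) - 1) * ((m : ℝ) - 2) *
          ∑ a : Equiv.Perm (Fin m),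
            gg c ((a.symm i : ℕ)) ((a.symm j : ℕ)) * gg c ((a.symm j : ℕ)) ((a.symm k : ℕ))
        = ((m * (m - 1) * (m - 2) : ℕ) : ℝ) *
          ∑ a : Equiv.Perm (Fin m),
            gg c ((a.symm i : ℕ)) ((a.symm j : ℕ)) * gg c ((a.symm j : ℕ)) ((a.symm k : ℕ)) := by
          rw [hKr]
      _ = (Nat.factorial m : ℝ) * ∑ t ∈ DD m, gg c t.1 t.2.1 * gg c t.2.1 t.2.2 := k3
      _ = (Nat.factorial m : ℝ) * -∑ t ∈ DD m, gg c t.1 t.2.1 * gg c t.1 t.2.2 := by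
          rw [S3_eq c]
      _ = (Nat.factorial m : ℝ) *
            -(4 * SS m (fun a b => c a * c (a + b)) - 2 * SS m (fun a b => c a * c b)) := by
          rw [core c]
      _ = (Nat.factorial m : ℝ) * -((m : ℝ) * ((m : ℝ) - 1) * ((m : ℝ) - 2) * b1 m c) := by
          rw [hKb1, bridge hm c]; ring
      _ = (m : ℝ) * ((m : ℝ) - 1) * ((m : ℝ) - 2) * -((Nat.factorial m : ℝ) * b1 m c) := by
          ring

end OofA
end

section
/- For all (i,j), (k,l) ∈ S such that the sets {i,j} and {k,l} are disjoint, Σ_{a∈A} z_{ij}(a) z_{kl}(a) = 0. (Lemma A.2(c).) -/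
open Matrix Finset

namespace OofA

/-- Lemma A.2(c): for `(i,j), (k,l) ∈ S` with `{i,j}` and `{k,l}` disjoint,
`Σ_a z_{ij}(a) z_{kl}(a) = 0`. -/
theorem statement8 {m : ℕ} (hm : 3 ≤ m) (c : ℕ → ℝ) (hc1 : c 1 = 1)
    (hmono : ∀ h : ℕ, 1 ≤ h → h + 1 ≤ m - 1 → c (h + 1) ≤ c h)
    (hlast : 0 ≤ c (m - 1)) (ij kl : Pairs m)
    (h1 : ij.1.1 ≠ kl.1.1) (h2 : ij.1.1 ≠ kl.1.2)
    (h3 : ij.1.2 ≠ kl.1.1) (h4 : ij.1.2 ≠ kl.1.2) :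
    (∑ a : Equiv.Perm (Fin m), z c a ij * z c a kl) = 0 := by
  classical
  set s : Equiv.Perm (Fin m) := Equiv.swap ij.1.1 ij.1.2 with hs
  have hne : ij.1.1 ≠ ij.1.2 := ne_of_lt ij.2
  have esymm : ∀ (a : Equiv.Perm (Fin m)) (x : Fin m), (s * a).symm x = a.symm (s x) := by
    intro a x
    simp [Equiv.Perm.mul_def, Equiv.symm_trans_apply, hs]
  have key : ∀ a : Equiv.Perm (Fin m),
      z c (s * a) ij * z c (s * a) kl = -(z c a ij * z c a kl) := by
    intro a
    have e1 : (s * a).symm ij.1.1 = a.symm ij.1.2 := by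
      rw [esymm]; simp [hs]
    have e2 : (s * a).symm ij.1.2 = a.symm ij.1.1 := by
      rw [esymm]; simp [hs]
    have e3 : (s * a).symm kl.1.1 = a.symm kl.1.1 := by
      rw [esymm, hs, Equiv.swap_apply_of_ne_of_ne h1.symm h3.symm]
    have e4 : (s * a).symm kl.1.2 = a.symm kl.1.2 := by
      rw [esymm, hs, Equiv.swap_apply_of_ne_of_ne h2.symm h4.symm]
    have hkl : z c (s * a) kl = z c a kl := by
      simp only [z, e3, e4]
    have hpq : (a.symm ij.1.1 : ℕ) ≠ (a.symm ij.1.2 : ℕ) := by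
      simp only [ne_eq, Fin.val_eq_val, EmbeddingLike.apply_eq_iff_eq]
      exact hne
    have hij : z c (s * a) ij = -(z c a ij) := by
      simp only [z, e1, e2]
      rcases lt_or_gt_of_ne hpq with h | h
      · rw [if_pos h, if_neg (not_lt.mpr h.le)]; simp [Nat.dist_comm]
      · rw [if_neg (not_lt.mpr h.le), if_pos h]; simp [Nat.dist_comm]
    rw [hij, hkl]; ring
  have reindex : (∑ a : Equiv.Perm (Fin m), z c a ij * z c a kl)
      = ∑ a : Equiv.Perm (Fin m), z c (s * a) ij * z c (s * a) kl := by
    exact (Fintype.sum_equiv (Equiv.mulLeft s) _ _ (fun a => rfl)).symm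
  have : (∑ a : Equiv.Perm (Fin m), z c a ij * z c a kl)
      = -(∑ a : Equiv.Perm (Fin m), z c a ij * z c a kl) := by
    conv_lhs => rw [reindex]
    simp only [key, Finset.sum_neg_distrib]
  linarith
end OofA
end

section
/- The matrix V satisfies V² = 2(m−2)·I_q + (m−4)·V, where I_q is the q×q identity matrix. (Lemma A.3(a).) -/
open Matrix Finset

namespace OofA

noncomputable def Bmat (m : ℕ) : Matrix (Pairs m) (Fin m) ℝ := fun ij x =>
  (if x = ij.1.1 then 1 else 0) - (if x = ij.1.2 then 1 else 0)

lemma sum_ind {m : ℕ} (a b : Fin m) :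
    ∑ x : Fin m, (if x = a then (1:ℝ) else 0) * (if x = b then 1 else 0)
      = if a = b then 1 else 0 := by
  simp [ite_and, Finset.sum_ite_eq, eq_comm]

lemma BBt {m : ℕ} (ij kl : Pairs m) :
    (Bmat m * (Bmat m)ᵀ) ij kl =
      (if ij.1.1 = kl.1.1 then (1:ℝ) else 0) - (if ij.1.1 = kl.1.2 then 1 else 0)
      - (if ij.1.2 = kl.1.1 then 1 else 0) + (if ij.1.2 = kl.1.2 then 1 else 0) := by
  simp only [mul_apply, transpose_apply, Bmat, sub_mul, mul_sub,
    Finset.sum_sub_distrib, sum_ind]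
  ring

lemma V_eq (m : ℕ) : V m = Bmat m * (Bmat m)ᵀ - (2:ℝ) • (1 : Matrix (Pairs m) (Pairs m) ℝ) := by
  ext ij kl
  obtain ⟨⟨i, j⟩, hij⟩ := ij
  obtain ⟨⟨k, l⟩, hkl⟩ := kl
  rw [Matrix.sub_apply, BBt]
  simp only [V, Matrix.smul_apply, Matrix.one_apply, Subtype.mk.injEq, Prod.mk.injEq,
    smul_eq_mul]
  split_ifs
  all_goals
    try simp only [Fin.ext_iff, Fin.lt_def, Prod.mk.injEq, not_or, not_and, ne_eq] at *
  all_goals try norm_num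
  all_goals try omega

lemma sum_pairs {m : ℕ} (g : Fin m × Fin m → ℝ)
    (hsym : ∀ p : Fin m × Fin m, g (p.2, p.1) = g p)
    (hdiag : ∀ i : Fin m, g (i, i) = 0) :
    ∑ p : Fin m × Fin m, g p = 2 * ∑ ij : Pairs m, g ij.1 := by
  classical
  have h1 : ∑ ij : Pairs m, g ij.1
      = ∑ p ∈ univ.filter (fun p : Fin m × Fin m => p.1 < p.2), g p := by
    rw [Finset.sum_subtype (p := fun q : Fin m × Fin m => q.1 < q.2)
      (univ.filter (fun p : Fin m × Fin m => p.1 < p.2)) (by simp) g]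
  have h2 : ∑ p ∈ univ.filter (fun p : Fin m × Fin m => p.2 < p.1), g p
      = ∑ p ∈ univ.filter (fun p : Fin m × Fin m => p.1 < p.2), g p := by
    apply Finset.sum_nbij' (fun p => (p.2, p.1)) (fun p => (p.2, p.1)) <;>
      simp [hsym]
  have h3 : ∑ p ∈ univ.filter
      (fun p : Fin m × Fin m => ¬ p.1 < p.2 ∧ ¬ p.2 < p.1), g p = 0 := by
    apply Finset.sum_eq_zero
    intro p hp
    simp only [Finset.mem_filter, Finset.mem_univ, true_and] at hp
    have : p.1 = p.2 := le_antisymm (not_lt.1 hp.2) (not_lt.1 hp.1)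
    calc g p = g (p.1, p.2) := by rw [Prod.mk.eta]
    _ = 0 := by rw [this]; exact hdiag p.2
  have h4 := Finset.sum_filter_add_sum_filter_not Finset.univ
    (fun p : Fin m × Fin m => p.1 < p.2) g
  have h5 := Finset.sum_filter_add_sum_filter_not
    (univ.filter (fun p : Fin m × Fin m => ¬ p.1 < p.2))
    (fun p : Fin m × Fin m => p.2 < p.1) g
  rw [Finset.filter_filter, Finset.filter_filter] at h5
  have e1 : (univ.filter (fun p : Fin m × Fin m => ¬p.1 < p.2 ∧ p.2 < p.1))
      = univ.filter (fun p : Fin m × Fin m => p.2 < p.1) := by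
    apply Finset.filter_congr; intro p _; constructor
    · exact fun h => h.2
    · exact fun h => ⟨fun h' => absurd h (lt_asymm h'), h⟩
  rw [e1] at h5
  rw [h1]
  linarith [h4, h5, h2, h3]

lemma full_sum {m : ℕ} (x y : Fin m) :
    ∑ p : Fin m × Fin m,
      ((if x = p.1 then (1:ℝ) else 0) - (if x = p.2 then 1 else 0)) *
      ((if y = p.1 then (1:ℝ) else 0) - (if y = p.2 then 1 else 0))
    = 2 * (m:ℝ) * (if x = y then 1 else 0) - 2 := by
  rw [Fintype.sum_prod_type]
  simp only [sub_mul, mul_sub, Finset.sum_sub_distrib, mul_ite, ite_mul, mul_one, mul_zero,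
    one_mul, zero_mul, Finset.sum_ite_eq, Finset.mem_univ, if_true, Finset.sum_const,
    Finset.card_univ, Fintype.card_fin, nsmul_eq_mul, Finset.sum_ite_eq']
  split_ifs <;> simp_all <;> ring

lemma BtB (m : ℕ) : (Bmat m)ᵀ * Bmat m
    = (m:ℝ) • (1 : Matrix (Fin m) (Fin m) ℝ) - Matrix.of (fun _ _ => (1:ℝ)) := by
  ext x y
  have key := sum_pairs
    (fun p : Fin m × Fin m =>
      ((if x = p.1 then (1:ℝ) else 0) - (if x = p.2 then 1 else 0)) *
      ((if y = p.1 then (1:ℝ) else 0) - (if y = p.2 then 1 else 0)))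
    (by intro p; simp only; ring) (by intro i; simp only; ring)
  rw [full_sum] at key
  have hl : ((Bmat m)ᵀ * Bmat m) x y
      = ∑ ij : Pairs m,
      ((if x = ij.1.1 then (1:ℝ) else 0) - (if x = ij.1.2 then 1 else 0)) *
      ((if y = ij.1.1 then (1:ℝ) else 0) - (if y = ij.1.2 then 1 else 0)) := by
    simp [mul_apply, Bmat, mul_comm]
  rw [hl]
  simp only [Matrix.sub_apply, Matrix.smul_apply, Matrix.one_apply, Matrix.of_apply,
    smul_eq_mul]
  split_ifs with h
  · rw [if_pos h] at key; linarith
  · rw [if_neg h] at key; linarith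

lemma BJ (m : ℕ) :
    Bmat m * (Matrix.of (fun _ _ => (1:ℝ)) : Matrix (Fin m) (Fin m) ℝ) = 0 := by
  ext ij x
  simp [mul_apply, Bmat, Finset.sum_sub_distrib]

lemma AA (m : ℕ) :
    (Bmat m * (Bmat m)ᵀ) * (Bmat m * (Bmat m)ᵀ)
      = (m:ℝ) • (Bmat m * (Bmat m)ᵀ) := by
  have h : (Bmat m * (Bmat m)ᵀ) * (Bmat m * (Bmat m)ᵀ)
      = Bmat m * ((Bmat m)ᵀ * Bmat m) * (Bmat m)ᵀ := by
    simp only [Matrix.mul_assoc]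
  rw [h, BtB, Matrix.mul_sub, Matrix.mul_smul, Matrix.mul_one, Matrix.sub_mul,
    Matrix.smul_mul, BJ, Matrix.zero_mul, sub_zero]

/-- Lemma A.3(a): `V² = 2(m−2) I_q + (m−4) V`. -/
theorem statement9 {m : ℕ} (hm : 3 ≤ m) :
    V m ^ 2 = (2 * ((m : ℝ) - 2)) • (1 : Matrix (Pairs m) (Pairs m) ℝ) +
      ((m : ℝ) - 4) • V m := by
  rw [sq, V_eq, sub_mul, mul_sub, mul_sub, AA, Matrix.smul_mul, Matrix.mul_smul,
    Matrix.one_mul, Matrix.mul_one]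
  rw [Matrix.smul_mul, Matrix.one_mul, smul_smul]
  module
end OofA
end

section
/- For every (i,j) ∈ S, Σ_{a∈d*} z_{ij}(a) = 0; moreover Σ_{a∈d*} z_{ij}(a)² = N. (Lemma A.4(a): the first column of the model matrix of d* is orthogonal to every other column.) -/
open Matrix Finset

namespace OofA

section Aux

variable {s : ℕ}

noncomputable def mkPerm (C : Finset (Fin (s + s))) (σ : Fin s ≃ C)
    (τ : Fin s ≃ (Cᶜ : Finset (Fin (s + s)))) : Equiv.Perm (Fin (s + s)) :=
  finSumFinEquiv.symm.trans
    ((Equiv.sumCongr σ (τ.trans (Equiv.subtypeEquivRight (fun x => by simp))))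
      |>.trans (Equiv.Set.sumCompl (↑C : Set (Fin (s + s)))))

@[simp] lemma mkPerm_castAdd (C : Finset (Fin (s + s))) (σ : Fin s ≃ C)
    (τ : Fin s ≃ (Cᶜ : Finset (Fin (s + s)))) (k : Fin s) :
    mkPerm C σ τ (Fin.castAdd s k) = (σ k : Fin (s + s)) := by
  simp only [mkPerm, Equiv.trans_apply, finSumFinEquiv_symm_apply_castAdd,
    Equiv.sumCongr_apply, Sum.map_inl]
  rfl

@[simp] lemma mkPerm_natAdd (C : Finset (Fin (s + s))) (σ : Fin s ≃ C)
    (τ : Fin s ≃ (Cᶜ : Finset (Fin (s + s)))) (k : Fin s) :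
    mkPerm C σ τ (Fin.natAdd s k) = (τ k : Fin (s + s)) := by
  simp only [mkPerm, Equiv.trans_apply, finSumFinEquiv_symm_apply_natAdd,
    Equiv.sumCongr_apply, Sum.map_inr, Function.comp]
  rfl

lemma mkPerm_symm_of_mem {C : Finset (Fin (s + s))} {σ : Fin s ≃ C}
    {τ : Fin s ≃ (Cᶜ : Finset (Fin (s + s)))} {i : Fin (s + s)} (hi : i ∈ C) :
    (mkPerm C σ τ).symm i = Fin.castAdd s (σ.symm ⟨i, hi⟩) := by
  rw [Equiv.symm_apply_eq, mkPerm_castAdd, Equiv.apply_symm_apply]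

lemma mkPerm_symm_of_not_mem {C : Finset (Fin (s + s))} {σ : Fin s ≃ C}
    {τ : Fin s ≃ (Cᶜ : Finset (Fin (s + s)))} {i : Fin (s + s)} (hi : i ∈ Cᶜ) :
    (mkPerm C σ τ).symm i = Fin.natAdd s (τ.symm ⟨i, hi⟩) := by
  rw [Equiv.symm_apply_eq, mkPerm_natAdd, Equiv.apply_symm_apply]

def postEquiv {α β : Type*} (w : β ≃ β) : (α ≃ β) ≃ (α ≃ β) :=
  (Equiv.refl α).equivCongr w

lemma postEquiv_apply {α β : Type*} (w : β ≃ β) (σ : α ≃ β) :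
    postEquiv w σ = σ.trans w :=
  Equiv.ext fun _ => rfl

lemma sum_eq_zero_of_equiv_neg {ι : Type*} [Fintype ι] (E : ι ≃ ι) (F : ι → ℝ)
    (h : ∀ x, F (E x) = -F x) : ∑ x, F x = 0 := by
  have h1 : ∑ x, F (E x) = ∑ x, F x := Equiv.sum_comp E F
  have h2 : ∑ x, F (E x) = -∑ x, F x := by
    rw [← Finset.sum_neg_distrib]
    exact Finset.sum_congr rfl fun x _ => h x
  linarith

lemma if_flip (x y : ℕ) (h : x ≠ y) :
    (if y < x then (1 : ℝ) else -1) = -(if x < y then (1 : ℝ) else -1) := by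
  rcases lt_trichotomy x y with h' | h' | h'
  · simp [h', asymm h']
  · exact absurd h' h
  · simp [h', asymm h', not_lt_of_gt h']

/-- The involution on `s`-subsets given by swapping `i` and `j`. -/
def swapSet (i j : Fin (s + s)) :
    {C : Finset (Fin (s + s)) // C.card = s} ≃ {C : Finset (Fin (s + s)) // C.card = s} where
  toFun C := ⟨C.1.map (Equiv.swap i j).toEmbedding, by rw [Finset.card_map]; exact C.2⟩
  invFun C := ⟨C.1.map (Equiv.swap i j).toEmbedding, by rw [Finset.card_map]; exact C.2⟩
  left_inv C := Subtype.ext (by ext x; simp [Finset.mem_map_equiv, Equiv.symm_swap,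
    Equiv.swap_apply_self])
  right_inv C := Subtype.ext (by ext x; simp [Finset.mem_map_equiv, Equiv.symm_swap,
    Equiv.swap_apply_self])

lemma mem_swapSet {i j x : Fin (s + s)} {C : {C : Finset (Fin (s + s)) // C.card = s}} :
    x ∈ (swapSet i j C).1 ↔ Equiv.swap i j x ∈ C.1 := by
  simp [swapSet, Finset.mem_map_equiv, Equiv.symm_swap]

end Aux

/-- Lemma A.4(a): for the fractional design `d*` (even case `m = 2s`, pairwise order
model `c_h = 1`), `Σ_{a ∈ d*} z_{ij}(a) = 0` and `Σ_{a ∈ d*} z_{ij}(a)² = N = m!/s!`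
for every `(i,j) ∈ S`. -/
theorem statement16 {s : ℕ} (hs : 2 ≤ s)
    (f : ∀ C : Finset (Fin (s + s)), C.card = s →
      ((Fin s ≃ C) ≃ (Fin s ≃ (Cᶜ : Finset (Fin (s + s))))))
    (d : Finset (Equiv.Perm (Fin (s + s))))
    (hd : ∀ a : Equiv.Perm (Fin (s + s)), a ∈ d ↔
      ∃ (C : Finset (Fin (s + s))) (hC : C.card = s) (σ : Fin s ≃ C),
        (∀ k : Fin s, a (Fin.castAdd s k) = (σ k : Fin (s + s))) ∧
        (∀ k : Fin s, a (Fin.natAdd s k) = ((f C hC σ) k : Fin (s + s))))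
    (ij : Pairs (s + s)) :
    (∑ a ∈ d, z (fun _ => 1) a ij) = 0 ∧
      (∑ a ∈ d, (z (fun _ => 1) a ij) ^ 2) =
        ((Nat.factorial (s + s) / Nat.factorial s : ℕ) : ℝ) := by
  classical
  obtain ⟨⟨i, j⟩, hlt⟩ := ij
  have hij : i ≠ j := ne_of_lt hlt
  have hzval : ∀ a : Equiv.Perm (Fin (s + s)),
      z (fun _ => 1) a ⟨(i, j), hlt⟩ =
        if ((a.symm i : Fin (s + s)) : ℕ) < ((a.symm j : Fin (s + s)) : ℕ) then 1 else -1 := by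
    intro a; unfold z; split <;> simp
  -- the parameterization of d
  let T := {C : Finset (Fin (s + s)) // C.card = s}
  let P := Σ C : T, (Fin s ≃ C.1)
  let g : P → Equiv.Perm (Fin (s + s)) := fun p => mkPerm p.1.1 p.2 (f p.1.1 p.1.2 p.2)
  have hgmem : ∀ p : P, g p ∈ d := fun p =>
    (hd _).mpr ⟨p.1.1, p.1.2, p.2, fun k => mkPerm_castAdd _ _ _ k, fun k => mkPerm_natAdd _ _ _ k⟩
  have hgsurj : ∀ a ∈ d, ∃ p : P, g p = a := by
    intro a ha
    obtain ⟨C, hC, σ, h1, h2⟩ := (hd a).mp ha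
    refine ⟨⟨⟨C, hC⟩, σ⟩, Equiv.ext fun x => ?_⟩
    obtain ⟨y, rfl⟩ := finSumFinEquiv.surjective x
    cases y with
    | inl k =>
        rw [finSumFinEquiv_apply_left]
        rw [show g ⟨⟨C, hC⟩, σ⟩ = mkPerm C σ (f C hC σ) from rfl, mkPerm_castAdd, h1]
    | inr k =>
        rw [finSumFinEquiv_apply_right]
        rw [show g ⟨⟨C, hC⟩, σ⟩ = mkPerm C σ (f C hC σ) from rfl, mkPerm_natAdd, h2]
  have hginj : Function.Injective g := by
    rintro ⟨⟨C, hC⟩, σ⟩ ⟨⟨C', hC'⟩, σ'⟩ h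
    have hco : ∀ k : Fin s, ((σ k : Fin (s + s))) = ((σ' k : Fin (s + s))) := by
      intro k
      have h1 : mkPerm C σ (f C hC σ) (Fin.castAdd s k)
          = mkPerm C' σ' (f C' hC' σ') (Fin.castAdd s k) :=
        congrArg (fun e : Equiv.Perm (Fin (s + s)) => e (Fin.castAdd s k)) h
      rwa [mkPerm_castAdd, mkPerm_castAdd] at h1
    have hCC : C = C' := by
      ext x
      constructor
      · intro hx
        have h2 := hco (σ.symm ⟨x, hx⟩)
        rw [Equiv.apply_symm_apply] at h2
        rw [show x = ((σ' (σ.symm ⟨x, hx⟩) : Fin (s + s))) from h2]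
        exact (σ' _).2
      · intro hx
        have h2 := hco (σ'.symm ⟨x, hx⟩)
        rw [Equiv.apply_symm_apply] at h2
        rw [show x = ((σ (σ'.symm ⟨x, hx⟩) : Fin (s + s))) from h2.symm]
        exact (σ _).2
    subst hCC
    have hσ : σ = σ' := Equiv.ext fun k => Subtype.ext (hco k)
    subst hσ
    rfl
  have hsum : ∀ F : Equiv.Perm (Fin (s + s)) → ℝ, ∑ a ∈ d, F a = ∑ p : P, F (g p) := by
    intro F
    exact (Finset.sum_bij (fun p _ => g p) (fun p _ => hgmem p)
      (fun p _ q _ h => hginj h)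
      (fun b hb => by obtain ⟨p, hp⟩ := hgsurj b hb; exact ⟨p, Finset.mem_univ p, hp⟩)
      (fun p _ => rfl)).symm
  -- cardinalities
  have hcardEquiv : ∀ (C : Finset (Fin (s + s))), C.card = s →
      Fintype.card (Fin s ≃ C) = s.factorial := by
    intro C hC
    have hcc : Fintype.card (Fin s) = Fintype.card C := by
      simp [Fintype.card_coe, hC]
    rw [Fintype.card_equiv (Fintype.equivOfCardEq hcc), Fintype.card_fin]
  have hcardP : Fintype.card P = Nat.factorial (s + s) / Nat.factorial s := by
    rw [Fintype.card_sigma]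
    rw [Finset.sum_congr rfl (fun (C : T) _ => hcardEquiv C.1 C.2), Finset.sum_const,
      Finset.card_univ]
    have hT : Fintype.card T = Nat.choose (s + s) s := by
      have h' : Fintype.card {C : Finset (Fin (s + s)) // C.card = s} = Nat.choose (s + s) s := by
        rw [Fintype.card_finset_len, Fintype.card_fin]
      exact h'
    rw [hT]
    rw [smul_eq_mul]
    have h1 : (s + s).choose s * s.factorial * s.factorial = (s + s).factorial := by
      have h0 := Nat.choose_mul_factorial_mul_factorial (show s ≤ s + s by omega)
      simpa [show s + s - s = s by omega] using h0
    have h2 : 0 < s.factorial := Nat.factorial_pos s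
    exact (Nat.div_eq_of_eq_mul_left h2 (by rw [← h1])).symm
  -- the inner sums
  have hinner : ∀ (C : Finset (Fin (s + s))) (hC : C.card = s),
      (∑ σ : Fin s ≃ C, z (fun _ => 1) (mkPerm C σ (f C hC σ)) ⟨(i, j), hlt⟩) =
      (if i ∈ C ∧ j ∉ C then (s.factorial : ℝ)
        else if j ∈ C ∧ i ∉ C then -(s.factorial : ℝ) else 0) := by
    intro C hC
    by_cases hi : i ∈ C <;> by_cases hj : j ∈ C
    · -- both in C
      rw [if_neg (by tauto), if_neg (by tauto)]
      have hz1 : ∀ σ : Fin s ≃ C, z (fun _ => 1) (mkPerm C σ (f C hC σ)) ⟨(i, j), hlt⟩ =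
          if ((σ.symm ⟨i, hi⟩ : Fin s) : ℕ) < ((σ.symm ⟨j, hj⟩ : Fin s) : ℕ) then 1 else -1 := by
        intro σ
        rw [hzval, mkPerm_symm_of_mem hi, mkPerm_symm_of_mem hj]
        simp [Fin.coe_castAdd]
      have hab : (⟨i, hi⟩ : C) ≠ ⟨j, hj⟩ := fun h => hij (congrArg Subtype.val h)
      apply sum_eq_zero_of_equiv_neg (postEquiv (Equiv.swap (⟨i, hi⟩ : C) ⟨j, hj⟩))
      intro σ
      rw [hz1, hz1, postEquiv_apply]
      have hsymm : ∀ x : C, (σ.trans (Equiv.swap (⟨i, hi⟩ : C) ⟨j, hj⟩)).symm x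
          = σ.symm (Equiv.swap (⟨i, hi⟩ : C) ⟨j, hj⟩ x) := by
        intro x
        rw [Equiv.symm_trans_apply, Equiv.symm_swap]
      rw [hsymm, hsymm, Equiv.swap_apply_left, Equiv.swap_apply_right]
      exact if_flip _ _ (fun h => hab (σ.symm.injective (Fin.val_injective h)))
    · -- i ∈ C, j ∉ C
      rw [if_pos ⟨hi, hj⟩]
      have hj' : j ∈ Cᶜ := Finset.mem_compl.mpr hj
      have hz1 : ∀ σ : Fin s ≃ C, z (fun _ => 1) (mkPerm C σ (f C hC σ)) ⟨(i, j), hlt⟩ = 1 := by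
        intro σ
        rw [hzval, mkPerm_symm_of_mem hi, mkPerm_symm_of_not_mem hj', if_pos]
        have := (σ.symm ⟨i, hi⟩).isLt
        simp only [Fin.coe_castAdd, Fin.coe_natAdd]
        omega
      rw [Finset.sum_congr rfl (fun σ _ => hz1 σ), Finset.sum_const, Finset.card_univ,
        hcardEquiv C hC]
      simp
    · -- j ∈ C, i ∉ C
      rw [if_neg (by tauto), if_pos ⟨hj, hi⟩]
      have hi' : i ∈ Cᶜ := Finset.mem_compl.mpr hi
      have hz1 : ∀ σ : Fin s ≃ C, z (fun _ => 1) (mkPerm C σ (f C hC σ)) ⟨(i, j), hlt⟩ = -1 := by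
        intro σ
        rw [hzval, mkPerm_symm_of_not_mem hi', mkPerm_symm_of_mem hj, if_neg]
        have := (σ.symm ⟨j, hj⟩).isLt
        simp only [Fin.coe_castAdd, Fin.coe_natAdd]
        omega
      rw [Finset.sum_congr rfl (fun σ _ => hz1 σ), Finset.sum_const, Finset.card_univ,
        hcardEquiv C hC]
      simp
    · -- both not in C
      rw [if_neg (by tauto), if_neg (by tauto)]
      have hi' : i ∈ Cᶜ := Finset.mem_compl.mpr hi
      have hj' : j ∈ Cᶜ := Finset.mem_compl.mpr hj
      have hz1 : ∀ σ : Fin s ≃ C, z (fun _ => 1) (mkPerm C σ (f C hC σ)) ⟨(i, j), hlt⟩ =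
          if (((f C hC σ).symm ⟨i, hi'⟩ : Fin s) : ℕ) < (((f C hC σ).symm ⟨j, hj'⟩ : Fin s) : ℕ)
            then 1 else -1 := by
        intro σ
        rw [hzval, mkPerm_symm_of_not_mem hi', mkPerm_symm_of_not_mem hj']
        simp only [Fin.coe_natAdd, add_lt_add_iff_left, Fin.val_fin_lt]
      have hab : (⟨i, hi'⟩ : (Cᶜ : Finset (Fin (s + s)))) ≠ ⟨j, hj'⟩ :=
        fun h => hij (congrArg Subtype.val h)
      apply sum_eq_zero_of_equiv_neg
        ((f C hC).trans ((postEquiv (Equiv.swap (⟨i, hi'⟩ : (Cᶜ : Finset (Fin (s + s)))) ⟨j, hj'⟩)).trans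
          (f C hC).symm))
      intro σ
      rw [hz1, hz1]
      have hfE : f C hC (((f C hC).trans ((postEquiv (Equiv.swap (⟨i, hi'⟩ : (Cᶜ : Finset (Fin (s + s)))) ⟨j, hj'⟩)).trans
          (f C hC).symm)) σ) = (f C hC σ).trans (Equiv.swap (⟨i, hi'⟩ : (Cᶜ : Finset (Fin (s + s)))) ⟨j, hj'⟩) := by
        rw [Equiv.trans_apply, Equiv.trans_apply, Equiv.apply_symm_apply, postEquiv_apply]
      rw [hfE]
      have hsymm : ∀ x : (Cᶜ : Finset (Fin (s + s))),
          ((f C hC σ).trans (Equiv.swap (⟨i, hi'⟩ : (Cᶜ : Finset (Fin (s + s)))) ⟨j, hj'⟩)).symm x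
          = (f C hC σ).symm (Equiv.swap (⟨i, hi'⟩ : (Cᶜ : Finset (Fin (s + s)))) ⟨j, hj'⟩ x) := by
        intro x
        rw [Equiv.symm_trans_apply, Equiv.symm_swap]
      rw [hsymm, hsymm, Equiv.swap_apply_left, Equiv.swap_apply_right]
      exact if_flip _ _ (fun h => hab ((f C hC σ).symm.injective (Fin.val_injective h)))
  -- part 1
  have part1 : (∑ a ∈ d, z (fun _ => 1) a ⟨(i, j), hlt⟩) = 0 := by
    rw [hsum]
    rw [← Finset.univ_sigma_univ, Finset.sum_sigma]
    rw [Finset.sum_congr rfl (fun (C : T) _ => hinner C.1 C.2)]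
    apply sum_eq_zero_of_equiv_neg (swapSet i j)
    intro C
    have hmi : i ∈ (swapSet i j C).1 ↔ j ∈ C.1 := by
      rw [mem_swapSet, Equiv.swap_apply_left]
    have hmj : j ∈ (swapSet i j C).1 ↔ i ∈ C.1 := by
      rw [mem_swapSet, Equiv.swap_apply_right]
    by_cases h1 : i ∈ C.1 <;> by_cases h2 : j ∈ C.1 <;> simp [hmi, hmj, h1, h2]
  -- part 2
  have hsq : ∀ a : Equiv.Perm (Fin (s + s)), (z (fun _ => 1) a ⟨(i, j), hlt⟩) ^ 2 = 1 := by
    intro a; rw [hzval]; split <;> norm_num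
  refine ⟨part1, ?_⟩
  rw [Finset.sum_congr rfl (fun a _ => hsq a), Finset.sum_const]
  have hcd : d.card = Fintype.card P := by
    have h1 := hsum (fun _ => (1 : ℝ))
    simp only [Finset.sum_const, Finset.card_univ, nsmul_eq_mul, mul_one] at h1
    exact_mod_cast h1
  rw [hcd, hcardP]
  simp
end OofA
end
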